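/- arXiv:math/0306276 — 11 statements merged into one kernel-verified Lean document; each statement's English description precedes it below -/
import Mathlib

section
/- Suppose (x₀,y₀) ∈ ℝ² satisfies x₀ < 1 and y₀ ≤ 0 (so (x₀,y₀) is a real point of R₊ at which f is defined). Then (x₁,y₁) := f(x₀,y₀) is a point of ℝ² lying in R₊, i.e. x₁ ≤ 1 and y₁ ≤ 0, and moreover min{x₁ − 1, y₁} ≤ min{x₀ − 1, y₀} − 1. -/
open Filter

/-- The birational map f(x,y) = (y(x+a)/(x-1), x+a-1). -/
noncomputable def birat (a : ℝ) (p : ℝ × ℝ) : ℝ × ℝ :=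
  (p.2 * (p.1 + a) / (p.1 - 1), p.1 + a - 1)

/-- The inverse map f⁻¹(x,y) = (y+1-a, x(y-a)/(y+1)). -/
noncomputable def biratInv (a : ℝ) (p : ℝ × ℝ) : ℝ × ℝ :=
  (p.2 + 1 - a, p.1 * (p.2 - a) / (p.2 + 1))

/-- The forward orbit of `p` is defined up to time `n`. -/
def orbitDefined (a : ℝ) (p : ℝ × ℝ) (n : ℕ) : Prop :=
  ∀ k < n, ((birat a)^[k] p).1 ≠ 1

def Rplus : Set (ℝ × ℝ) := {p | p.1 ≤ 1 ∧ p.2 ≤ 0}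
def Rminus : Set (ℝ × ℝ) := {p | 0 ≤ p.1 ∧ -1 ≤ p.2}
def Rzero : Set (ℝ × ℝ) := {p | 1 ≤ p.1 ∧ p.2 ≤ -1}
def Rone : Set (ℝ × ℝ) := {p | p.1 ≤ 0 ∧ 0 ≤ p.2}
def intRplus : Set (ℝ × ℝ) := {p | p.1 < 1 ∧ p.2 < 0}
def intRzero : Set (ℝ × ℝ) := {p | 1 < p.1 ∧ p.2 < -1}
def intRone : Set (ℝ × ℝ) := {p | p.1 < 0 ∧ 0 < p.2}

/-- `Rw 0 = R₀`, `Rw 1 = R₁`. -/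
def Rw (i : Fin 2) : Set (ℝ × ℝ) := if i = 0 then Rzero else Rone

/-- `intRw 0 = int R₀`, `intRw 1 = int R₁`. -/
def intRw (i : Fin 2) : Set (ℝ × ℝ) := if i = 0 then intRzero else intRone

/-- Euclidean distance on ℝ². -/
noncomputable def eucDist (p q : ℝ × ℝ) : ℝ :=
  Real.sqrt ((p.1 - q.1) ^ 2 + (p.2 - q.2) ^ 2)

theorem birat_fst_le {a x y : ℝ} (ha : a ≤ -1) (hx : x < 1) (hy : y ≤ 0) :
    (birat a (x, y)).1 ≤ y := by
  rw [birat, div_le_iff_of_neg (by linarith)]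
  nlinarith

theorem birat_snd_le {a : ℝ} (ha : a ≤ -1) (x y : ℝ) : (birat a (x, y)).2 ≤ x - 2 := by
  rw [birat]
  linarith

theorem stmt0 (a : ℝ) (ha : a < -1) (x0 y0 : ℝ) (hx : x0 < 1) (hy : y0 ≤ 0) :
    (birat a (x0, y0)).1 ≤ 1 ∧ (birat a (x0, y0)).2 ≤ 0 ∧
    min ((birat a (x0, y0)).1 - 1) (birat a (x0, y0)).2 ≤ min (x0 - 1) y0 - 1 := by
  have hfst := birat_fst_le ha.le hx hy
  have hsnd := birat_snd_le ha.le x0 y0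
  refine ⟨by linarith, by linarith, ?_⟩
  calc min ((birat a (x0, y0)).1 - 1) (birat a (x0, y0)).2
      ≤ min (y0 - 1) (x0 - 1 - 1) := min_le_min (by linarith) (by linarith)
    _ = min (x0 - 1) y0 - 1 := by rw [min_sub_sub_right, min_comm]
end

section
/- Suppose (x₀,y₀) ∈ ℝ² satisfies x₀ ≥ 0 and y₀ > −1 (so (x₀,y₀) is a real point of R₋ at which f⁻¹ is defined). Then (x₋₁,y₋₁) := f⁻¹(x₀,y₀) is a point of ℝ² lying in R₋, i.e. x₋₁ ≥ 0 and y₋₁ ≥ −1, and moreover max{x₋₁, y₋₁ + 1} ≥ max{x₀, y₀ + 1} + 1. -/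
open Filter

theorem snd_add_two_le_biratInv_fst {a : ℝ} (ha : a ≤ -1) (p : ℝ × ℝ) : p.2 + 2 ≤ (biratInv a p).1 := by
  simp only [biratInv]
  linarith

theorem fst_le_biratInv_snd {a : ℝ} (ha : a ≤ -1) {p : ℝ × ℝ} (hx : 0 ≤ p.1) (hy : -1 < p.2) :
    p.1 ≤ (biratInv a p).2 := by
  have hd : 0 < p.2 + 1 := by linarith
  simp only [biratInv]
  rw [le_div_iff₀ hd]
  exact mul_le_mul_of_nonneg_left (by linarith) hx

theorem stmt1 (a : ℝ) (ha : a < -1) (x0 y0 : ℝ) (hx : 0 ≤ x0) (hy : -1 < y0) :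
    0 ≤ (biratInv a (x0, y0)).1 ∧ -1 ≤ (biratInv a (x0, y0)).2 ∧
    max x0 (y0 + 1) + 1 ≤ max (biratInv a (x0, y0)).1 ((biratInv a (x0, y0)).2 + 1) := by
  have hfst := snd_add_two_le_biratInv_fst ha.le (x0, y0)
  have hsnd := fst_le_biratInv_snd (p := (x0, y0)) ha.le hx hy
  dsimp only at hfst hsnd
  refine ⟨by linarith, by linarith, ?_⟩
  rw [← max_add_add_right]
  exact max_le (le_max_of_le_right (by linarith)) (le_max_of_le_left (by linarith))
end

section
/- For every (x,y) ∈ ℝ² with x ≤ 0 and y ≥ 0 (i.e. (x,y) ∈ R₁), both f(x,y) and f⁻¹(x,y) are defined, and neither f(x,y) nor f⁻¹(x,y) lies in the interior int R₁ = (-∞,0)×(0,∞) of R₁. In particular no real orbit of f can stay in int R₁ for two consecutive times. -/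
open Filter

theorem birat_notMem_intRone {a : ℝ} {p : ℝ × ℝ} (h : p.1 + a ≤ 1) : birat a p ∉ intRone :=
  fun hp => by
    have hsnd : 0 < p.1 + a - 1 := hp.2
    linarith

theorem biratInv_notMem_intRone {a : ℝ} {p : ℝ × ℝ} (h : a ≤ p.2 + 1) : biratInv a p ∉ intRone :=
  fun hp => by
    have hfst : p.2 + 1 - a < 0 := hp.1
    linarith

theorem stmt2 (a : ℝ) (ha : a < -1) (x y : ℝ) (hx : x ≤ 0) (hy : 0 ≤ y) :
    x ≠ 1 ∧ y ≠ -1 ∧ birat a (x, y) ∉ intRone ∧ biratInv a (x, y) ∉ intRone :=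
  ⟨by linarith, by linarith, birat_notMem_intRone (by dsimp only; linarith),
    biratInv_notMem_intRone (by dsimp only; linarith)⟩
end

section
/- Let p ∈ ℝ² be such that for every n ≥ 0 the forward orbit of p is defined up to time n and fⁿ(p) ∈ R₀ ∪ R₁. Writing fⁿ(p) = (xₙ,yₙ), it is not the case that both |xₙ| → ∞ and |yₙ| → ∞ as n → ∞; that is, an orbit which remains in the real part of R₀ ∪ R₁ for all forward time cannot converge to the parabolic fixed point at (∞,∞). -/
open Filter

/-! ### Auxiliary machinery for `stmt3` -/

private noncomputable def xc (a : ℝ) (p : ℝ × ℝ) (n : ℕ) : ℝ := ((birat a)^[n] p).1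

private noncomputable def yc (a : ℝ) (p : ℝ × ℝ) (n : ℕ) : ℝ := ((birat a)^[n] p).2

set_option maxHeartbeats 1000000 in
/-- One step of the induced recurrence on absolute values of the second coordinates. -/
private lemma step_facts (c A B A' B' : ℝ) (hc : 0 < c)
    (hA : c ^ 2 + 5 * c + 5 ≤ A) (hB : c ^ 2 + 5 * c + 5 ≤ B) (hB' : 0 < B')
    (hRA : (A' - (c + 2)) * (B + c + 1) = A * (B + 1))
    (hRB : (B' + (c + 2)) * (A' - c - 1) = B * (A' - 1)) :
    A' ≤ A + (c + 2) ∧ (A ≤ B → A + 2 ≤ A') ∧ (B ≤ A → B' ≤ B - 1) ∧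
      A / B + 1 / (2 * B) ≤ A' / B' := by
  have hA0 : 0 < A := by nlinarith
  have hB0 : 0 < B := by nlinarith
  have hD1 : 0 < B + c + 1 := by linarith
  have e0 : (A' - (c + 2) - A / 2) * (B + c + 1) = A / 2 * (B + 1 - c) := by
    linear_combination hRA
  have hAlow : A / 2 + (c + 2) ≤ A' := by nlinarith [e0]
  have hD2 : c ≤ A' - c - 1 := by nlinarith
  have hD2pos : 0 < A' - c - 1 := lt_of_lt_of_le hc hD2
  -- C1 : upper bound on A'
  have e1 : (A' - (c + 2) - A) * (B + c + 1) = -(A * c) := by linear_combination hRA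
  have C1 : A' ≤ A + (c + 2) := by nlinarith [e1]
  -- C2 : growth of A when A ≤ B
  have e2 : (A' - A - 2) * (B + c + 1) = c * (B - A) + c * (c + 1) := by
    linear_combination hRA
  have C2 : A ≤ B → A + 2 ≤ A' := by
    intro hAB
    nlinarith [e2]
  have e4 : (A' - c - 1) * (B + c + 1) = A * (B + 1) + (B + c + 1) := by
    linear_combination hRA
  -- C3 : decay of B when B ≤ A
  have C3 : B ≤ A → B' ≤ B - 1 := by
    intro hBA
    have e3 : (B - 1 - B') * (A' - c - 1) = (c + 1) * (A' - c - 1) - B * c := by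
      linear_combination -hRB
    have h5 : 0 ≤ ((c + 1) * (A' - c - 1) - B * c) * (B + c + 1) := by
      have h5' : (c + 1) * ((A' - c - 1) * (B + c + 1)) - B * c * (B + c + 1)
          = ((c + 1) * (A' - c - 1) - B * c) * (B + c + 1) := by ring
      rw [← h5', e4]
      have hh1 : (c + 1) * (B + 1) * B ≤ (c + 1) * (B + 1) * A :=
        mul_le_mul_of_nonneg_left hBA (by nlinarith)
      have hh2 : (0 : ℝ) ≤ B * (B + 1 - c ^ 2) := by nlinarith
      have hh3 : (0 : ℝ) ≤ (c + 1) * (B + c + 1) := by nlinarith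
      nlinarith [hh1, hh2, hh3]
    have h6 : 0 ≤ (c + 1) * (A' - c - 1) - B * c :=
      (mul_nonneg_iff_of_pos_right hD1).1 h5
    have h8 : 0 ≤ (B - 1 - B') * (A' - c - 1) := by rw [e3]; linarith
    have h9 : 0 ≤ B - 1 - B' := (mul_nonneg_iff_of_pos_right hD2pos).1 h8
    linarith
  -- B' ≤ 2 B
  have e5 : (B' + (c + 2) - B) * (A' - c - 1) = B * c := by linear_combination hRB
  have hB2 : B' ≤ 2 * B := by
    have h5 : (B' + (c + 2) - B) * (A' - c - 1) ≤ B * (A' - c - 1) := by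
      rw [e5]
      nlinarith
    have := le_of_mul_le_mul_right h5 hD2pos
    linarith
  -- the key positivity: (A'B - AB')·(A'-c-1) ≥ A'B
  have h1 : ((A' * B - A * B') * (A' - c - 1) - A' * B) * (B + c + 1) ^ 2
      = A * (B * (B + c + 1) * (B - c ^ 2 - c + 1) + (c + 2) * (B + c + 1) ^ 2
          + A * (B + 1) * (2 * B + c ^ 2 + 3 * c + 2)) := by
    linear_combination (A' * B * (B + c + 1) + A * ((c + 1) * (c + 2) + 2 * B)) * hRA
      - A * (B + c + 1) ^ 2 * hRB
  have hb2 : 0 ≤ B - c ^ 2 - c + 1 := by nlinarith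
  have h2 : 0 ≤ (A' * B - A * B') * (A' - c - 1) - A' * B := by
    have h3 : 0 ≤ ((A' * B - A * B') * (A' - c - 1) - A' * B) * (B + c + 1) ^ 2 := by
      rw [h1]
      have t1 : 0 ≤ B * (B + c + 1) * (B - c ^ 2 - c + 1) :=
        mul_nonneg (mul_nonneg hB0.le hD1.le) hb2
      have t2 : 0 ≤ (c + 2) * (B + c + 1) ^ 2 := by positivity
      have t3 : 0 ≤ A * (B + 1) * (2 * B + c ^ 2 + 3 * c + 2) := by
        apply mul_nonneg (mul_nonneg hA0.le (by linarith)); nlinarith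
      exact mul_nonneg hA0.le (by linarith)
    have hsq : (0 : ℝ) < (B + c + 1) ^ 2 := by positivity
    exact (mul_nonneg_iff_of_pos_right hsq).1 h3
  have key : B ≤ A' * B - A * B' := by
    have h4 : B * (A' - c - 1) ≤ (A' * B - A * B') * (A' - c - 1) := by
      have hAB' : B * (A' - c - 1) ≤ A' * B := by nlinarith
      linarith
    exact le_of_mul_le_mul_right h4 hD2pos
  -- conclude the ratio inequality
  have hmul : (2 * A + 1) * B' ≤ A' * (2 * B) := by nlinarith [key, hB2]
  have hrw : A / B + 1 / (2 * B) = (2 * A + 1) / (2 * B) := by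
    field_simp
  refine ⟨C1, C2, C3, ?_⟩
  rw [hrw, div_le_div_iff₀ (by positivity) hB']
  linarith

/-- No pair of sequences bounded below by `c²+5c+5` can satisfy the two recurrences. -/
private lemma no_seq (c : ℝ) (hc : 0 < c) (A B : ℕ → ℝ)
    (hA : ∀ k, c ^ 2 + 5 * c + 5 ≤ A k) (hB : ∀ k, c ^ 2 + 5 * c + 5 ≤ B k)
    (hRA : ∀ k, (A (k + 1) - (c + 2)) * (B k + c + 1) = A k * (B k + 1))
    (hRB : ∀ k, (B (k + 1) + (c + 2)) * (A (k + 1) - c - 1) = B k * (A (k + 1) - 1)) :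
    False := by
  have hApos : ∀ k, 0 < A k := fun k => by nlinarith [hA k]
  have hBpos : ∀ k, 0 < B k := fun k => by nlinarith [hB k]
  have S : ∀ k, A (k + 1) ≤ A k + (c + 2) ∧ (A k ≤ B k → A k + 2 ≤ A (k + 1)) ∧
      (B k ≤ A k → B (k + 1) ≤ B k - 1) ∧ A k / B k + 1 / (2 * B k) ≤ A (k + 1) / B (k + 1) :=
    fun k => step_facts c (A k) (B k) (A (k + 1)) (B (k + 1)) hc (hA k) (hB k)
      (hBpos (k + 1)) (hRA k) (hRB k)
  have tmono : Monotone fun k => A k / B k := by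
    apply monotone_nat_of_le_succ
    intro k
    have h0 : (0 : ℝ) ≤ 1 / (2 * B k) := by
      have := hBpos k
      positivity
    linarith [(S k).2.2.2]
  by_cases hcase : ∃ K, B K ≤ A K
  · obtain ⟨K, hK⟩ := hcase
    have h1K : 1 ≤ A K / B K := (one_le_div (hBpos K)).2 hK
    have hdec : ∀ m : ℕ, B (K + m) ≤ B K - m := by
      intro m
      induction m with
      | zero => simp
      | succ m ih =>
        have hle : B (K + m) ≤ A (K + m) := by
          have h2 : 1 ≤ A (K + m) / B (K + m) :=
            le_trans h1K (tmono (Nat.le_add_right K m))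
          exact (one_le_div (hBpos _)).1 h2
        have h3 := (S (K + m)).2.2.1 hle
        have : K + (m + 1) = K + m + 1 := by ring
        rw [this]
        push_cast
        push_cast at ih
        linarith
    obtain ⟨m, hm⟩ := exists_nat_gt (B K)
    have h4 := hdec m
    have h5 := hBpos (K + m)
    linarith
  · push_neg at hcase
    set τ := A 0 / B 0 with hτdef
    have hτ : 0 < τ := div_pos (hApos 0) (hBpos 0)
    have hup : ∀ k : ℕ, A k ≤ A 0 + (c + 2) * k := by
      intro k
      induction k with
      | zero => norm_num
      | succ k ih =>
        have h1 := (S k).1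
        push_cast
        push_cast at ih
        linarith
    have hτle : ∀ k, τ ≤ A k / B k := fun k => tmono (Nat.zero_le k)
    set D := A 0 + (c + 2) with hD
    have hDpos : 0 < D := by have := hApos 0; rw [hD]; linarith
    have hBk : ∀ k : ℕ, τ * B k ≤ D * (k + 1) := by
      intro k
      have h1 : τ * B k ≤ A k := by
        have h := hτle k
        rw [le_div_iff₀ (hBpos k)] at h
        exact h
      have h2 : A 0 + (c + 2) * (k : ℝ) ≤ D * (k + 1) := by
        rw [hD]
        have : (0 : ℝ) ≤ (k : ℝ) := Nat.cast_nonneg k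
        nlinarith [hApos 0]
      calc τ * B k ≤ A k := h1
        _ ≤ A 0 + (c + 2) * k := hup k
        _ ≤ D * (k + 1) := h2
    have hstep2 : ∀ k : ℕ,
        A k / B k + τ / 2 * (1 / D) * (1 / ((k : ℝ) + 1)) ≤ A (k + 1) / B (k + 1) := by
      intro k
      have h3 : τ / 2 * (1 / D) * (1 / ((k : ℝ) + 1)) ≤ 1 / (2 * B k) := by
        have hD0 : D ≠ 0 := ne_of_gt hDpos
        have hk0 : ((k : ℝ) + 1) ≠ 0 := by positivity
        have hrw : τ / 2 * (1 / D) * (1 / ((k : ℝ) + 1)) = τ / (2 * (D * ((k : ℝ) + 1))) := by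
          rw [div_mul_div_comm, div_mul_div_comm, mul_one, mul_one, mul_assoc]
        have hk1 : (0 : ℝ) < (k : ℝ) + 1 := by positivity
        have hden : (0 : ℝ) < 2 * (D * ((k : ℝ) + 1)) := by positivity
        have hbk : (0 : ℝ) < 2 * B k := by have := hBpos k; linarith
        rw [hrw, div_le_div_iff₀ hden hbk]
        have := hBk k
        nlinarith
      linarith [(S k).2.2.2]
    have hsum : ∀ n : ℕ,
        τ + τ / 2 * (1 / D) * (∑ i ∈ Finset.range n, (1 / ((i : ℝ) + 1))) ≤ A n / B n := by
      intro n
      induction n with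
      | zero =>
        rw [Finset.range_zero, Finset.sum_empty, hτdef]
        norm_num
      | succ n ih =>
        rw [Finset.sum_range_succ]
        have h6 := hstep2 n
        have hexp : τ / 2 * (1 / D) *
            ((∑ i ∈ Finset.range n, (1 / ((i : ℝ) + 1))) + 1 / ((n : ℝ) + 1))
            = τ / 2 * (1 / D) * (∑ i ∈ Finset.range n, (1 / ((i : ℝ) + 1)))
              + τ / 2 * (1 / D) * (1 / ((n : ℝ) + 1)) := by ring
        rw [mul_add]
        linarith
    obtain ⟨n, hn⟩ :=
      (Real.tendsto_sum_range_one_div_nat_succ_atTop.eventually_ge_atTop (2 * D / τ)).exists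
    have hSig : 2 * D / τ ≤ ∑ i ∈ Finset.range n, (1 / ((i : ℝ) + 1)) := hn
    have hlt : A n / B n < 1 := (div_lt_one (hBpos n)).2 (hcase n)
    have hκ : 0 < τ / 2 * (1 / D) := by positivity
    have h9 : τ / 2 * (1 / D) * (2 * D / τ)
        ≤ τ / 2 * (1 / D) * (∑ i ∈ Finset.range n, (1 / ((i : ℝ) + 1))) :=
      mul_le_mul_of_nonneg_left hSig hκ.le
    have h10 : τ / 2 * (1 / D) * (2 * D / τ) = 1 := by
      field_simp
    have h11 := hsum n
    linarith

theorem stmt3 (a : ℝ) (ha : a < -1) (p : ℝ × ℝ)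
    (hp : ∀ n : ℕ, orbitDefined a p n ∧ (birat a)^[n] p ∈ Rzero ∪ Rone) :
    ¬ (Tendsto (fun n : ℕ => |((birat a)^[n] p).1|) atTop atTop ∧
       Tendsto (fun n : ℕ => |((birat a)^[n] p).2|) atTop atTop) := by
  rintro ⟨hX, hY⟩
  set X := xc a p with hXdef
  set Y := yc a p with hYdef
  have hX' : Tendsto (fun n => |X n|) atTop atTop := hX
  have hY' : Tendsto (fun n => |Y n|) atTop atTop := hY
  have hx1 : ∀ n, X n ≠ 1 := fun n => (hp (n + 1)).1 n (Nat.lt_succ_self n)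
  have hmem : ∀ n, (1 ≤ X n ∧ Y n ≤ -1) ∨ (X n ≤ 0 ∧ 0 ≤ Y n) := by
    intro n
    rcases (hp n).2 with hr | hr
    · exact Or.inl hr
    · exact Or.inr hr
  have hYX : ∀ n, Y (n + 1) = X n + a - 1 := by
    intro n
    show ((birat a)^[n + 1] p).2 = ((birat a)^[n] p).1 + a - 1
    rw [Function.iterate_succ_apply']
    rfl
  have hx2 : ∀ n, X (n + 1) * (X n - 1) = Y n * (X n + a) := by
    intro n
    have hne : X n - 1 ≠ 0 := sub_ne_zero_of_ne (hx1 n)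
    show ((birat a)^[n + 1] p).1 * (X n - 1) = Y n * (X n + a)
    rw [Function.iterate_succ_apply']
    show Y n * (X n + a) / (X n - 1) * (X n - 1) = Y n * (X n + a)
    exact div_mul_cancel₀ _ hne
  have hmaster : ∀ n, (Y (n + 2) + (1 - a)) * (Y (n + 1) + -a) = Y n * (Y (n + 1) + 1) := by
    intro n
    have h1 := hYX n
    have h2 := hYX (n + 1)
    have h3 := hx2 n
    have e2 : Y (n + 2) + (1 - a) = X (n + 1) := by rw [h2]; ring
    have e1 : Y (n + 1) + -a = X n - 1 := by rw [h1]; ring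
    have e1' : Y (n + 1) + 1 = X n + a := by rw [h1]; ring
    rw [e2, e1, e1']
    exact h3
  set c := -1 - a with hcdef
  have hc : 0 < c := by rw [hcdef]; linarith
  set M := c ^ 2 + 5 * c + 5 with hMdef
  have hM : 0 < M := by rw [hMdef]; nlinarith
  obtain ⟨N, hN⟩ : ∃ N, ∀ n, N ≤ n → ((1 - a) + M + 1 ≤ |X n| ∧ M ≤ |Y n|) := by
    have h1 := hX'.eventually_ge_atTop ((1 - a) + M + 1)
    have h2 := hY'.eventually_ge_atTop M
    obtain ⟨N, hN⟩ := eventually_atTop.1 (h1.and h2)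
    exact ⟨N, fun n hn => hN n hn⟩
  have hflip : ∀ n, N ≤ n → (0 < Y n → Y (n + 1) ≤ -M) ∧ (Y n < 0 → M ≤ Y (n + 1)) := by
    intro n hn
    obtain ⟨hxn, hyn⟩ := hN n hn
    constructor
    · intro hy
      rcases hmem n with hr | hr
      · linarith [hr.2]
      · have hx0 : X n ≤ 0 := hr.1
        rw [abs_of_nonpos hx0] at hxn
        have := hYX n
        rw [this]
        linarith
    · intro hy
      rcases hmem n with hr | hr
      · have hx0 : 1 ≤ X n := hr.1
        rw [abs_of_pos (by linarith : 0 < X n)] at hxn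
        have := hYX n
        rw [this]
        linarith
      · linarith [hr.2]
  obtain ⟨N₀, hN₀N, hN₀sign⟩ : ∃ N₀, N ≤ N₀ ∧ Y N₀ < 0 := by
    rcases lt_or_ge (Y N) 0 with h | h
    · exact ⟨N, le_refl N, h⟩
    · have h0 : 0 < Y N := by
        have := (hN N (le_refl N)).2
        rw [abs_of_nonneg h] at this
        linarith
      have h1 := (hflip N (le_refl N)).1 h0
      exact ⟨N + 1, Nat.le_succ N, by linarith⟩
  have signs : ∀ k, Y (N₀ + 2 * k) < 0 ∧ 0 < Y (N₀ + 2 * k + 1) := by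
    intro k
    induction k with
    | zero =>
      constructor
      · simpa using hN₀sign
      · have h1 := (hflip N₀ hN₀N).2 (by simpa using hN₀sign)
        have : N₀ + 2 * 0 + 1 = N₀ + 1 := by ring
        rw [this]
        linarith
    | succ k ih =>
      have hge1 : N ≤ N₀ + 2 * k + 1 := by omega
      have h1 := (hflip (N₀ + 2 * k + 1) hge1).1 ih.2
      have hge2 : N ≤ N₀ + 2 * k + 1 + 1 := by omega
      have h2 := (hflip (N₀ + 2 * k + 1 + 1) hge2).2 (by linarith)
      constructor
      · rw [show N₀ + 2 * (k + 1) = N₀ + 2 * k + 1 + 1 by ring]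
        linarith
      · rw [show N₀ + 2 * (k + 1) + 1 = N₀ + 2 * k + 1 + 1 + 1 by ring]
        linarith
  refine no_seq c hc (fun k => -Y (N₀ + 2 * k)) (fun k => Y (N₀ + 2 * k + 1)) ?_ ?_ ?_ ?_
  · intro k
    have h := (hN (N₀ + 2 * k) (by omega)).2
    rw [abs_of_neg (signs k).1] at h
    rw [hMdef] at h
    exact h
  · intro k
    have h := (hN (N₀ + 2 * k + 1) (by omega)).2
    rw [abs_of_pos (signs k).2] at h
    rw [hMdef] at h
    exact h
  · intro k
    have h := hmaster (N₀ + 2 * k)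
    simp only [show N₀ + 2 * k + 2 = N₀ + 2 * (k + 1) by ring] at h
    rw [hcdef]
    linear_combination -h
  · intro k
    have h := hmaster (N₀ + 2 * k + 1)
    simp only [show N₀ + 2 * k + 1 + 2 = N₀ + 2 * (k + 1) + 1 by ring,
      show N₀ + 2 * k + 1 + 1 = N₀ + 2 * (k + 1) by ring] at h
    rw [hcdef]
    linear_combination -h
end

section
/- Let (x₀,y₀) ∈ ℝ² with x₀ < 1 and y₀ ≤ 0. Then for every n ≥ 0 the forward orbit of (x₀,y₀) is defined up to time n, and writing fⁿ(x₀,y₀) = (xₙ,yₙ) one has xₙ ≤ 1 and yₙ ≤ 0 for all n; moreover xₙ → −∞ and yₙ → −∞ as n → ∞ (points of R₊ converge to the parabolic fixed point at infinity under forward iteration). -/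
/-!
On `{x < 1, y ≤ 0}` the first coordinate of `f(x, y)` is `y (x + a)/(x - 1) ≤ y`, because
`(x + a)/(x - 1) ≥ 1`, and the second is `x + a - 1`. Hence with `c = (1 - a)/2 > 0` the function
`max x (y + c)` drops by at least `c` at every step, which forces both coordinates to `-∞`.
-/

open Filter

open Set

lemma tendsto_atBot_of_le_sub {u : ℕ → ℝ} {c : ℝ} (hc : 0 < c) (hu : ∀ n, u (n + 1) ≤ u n - c) :
    Tendsto u atTop atBot := by
  have hbound : ∀ n : ℕ, u n ≤ u 0 + -(n * c) := by
    intro n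
    induction n with
    | zero => simp
    | succ n ih => push_cast; linarith [hu n]
  refine tendsto_atBot_mono hbound (tendsto_atBot_add_const_left _ _ ?_)
  exact tendsto_neg_atTop_atBot.comp (tendsto_natCast_atTop_atTop.atTop_mul_const hc)

section

variable {a : ℝ}

def lowerStrip : Set (ℝ × ℝ) := {p | p.1 < 1 ∧ p.2 ≤ 0}

lemma birat_fst_le_snd (ha : a < -1) {p : ℝ × ℝ} (hp : p ∈ lowerStrip) :
    (birat a p).1 ≤ p.2 := by
  obtain ⟨hx, hy⟩ := hp
  show p.2 * (p.1 + a) / (p.1 - 1) ≤ p.2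
  rw [div_le_iff_of_neg (by linarith)]
  nlinarith

lemma mapsTo_birat_lowerStrip (ha : a < -1) : MapsTo (birat a) lowerStrip lowerStrip := by
  intro p hp
  have hfst := birat_fst_le_snd ha hp
  obtain ⟨hx, hy⟩ := hp
  refine ⟨by linarith, ?_⟩
  show p.1 + a - 1 ≤ 0
  linarith

lemma max_birat_le_sub (ha : a < -1) {p : ℝ × ℝ} (hp : p ∈ lowerStrip) :
    max (birat a p).1 ((birat a p).2 + (1 - a) / 2) ≤ max p.1 (p.2 + (1 - a) / 2) - (1 - a) / 2 := by
  have hfst := birat_fst_le_snd ha hp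
  have hsnd : (birat a p).2 = p.1 + a - 1 := rfl
  rw [le_sub_iff_add_le, ← max_add_add_right]
  exact max_le (by linarith [le_max_right p.1 (p.2 + (1 - a) / 2)])
    (by linarith [le_max_left p.1 (p.2 + (1 - a) / 2)])

end

theorem stmt4 (a : ℝ) (ha : a < -1) (x0 y0 : ℝ) (hx : x0 < 1) (hy : y0 ≤ 0) :
    (∀ n : ℕ, orbitDefined a (x0, y0) n ∧
      ((birat a)^[n] (x0, y0)).1 ≤ 1 ∧ ((birat a)^[n] (x0, y0)).2 ≤ 0) ∧
    Tendsto (fun n : ℕ => ((birat a)^[n] (x0, y0)).1) atTop atBot ∧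
    Tendsto (fun n : ℕ => ((birat a)^[n] (x0, y0)).2) atTop atBot := by
  set q : ℕ → ℝ × ℝ := fun n => (birat a)^[n] (x0, y0)
  have hq : ∀ n, q n ∈ lowerStrip := fun n =>
    (mapsTo_birat_lowerStrip ha).iterate n (show (x0, y0) ∈ lowerStrip from ⟨hx, hy⟩)
  have hc : 0 < (1 - a) / 2 := by linarith
  have hmax : Tendsto (fun n => max (q n).1 ((q n).2 + (1 - a) / 2)) atTop atBot := by
    refine tendsto_atBot_of_le_sub hc fun n => ?_
    simpa only [q, Function.iterate_succ_apply'] using max_birat_le_sub ha (hq n)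
  refine ⟨fun n => ⟨fun k _ => (hq k).1.ne, (hq n).1.le, (hq n).2⟩, ?_, ?_⟩
  · exact tendsto_atBot_mono (fun n => le_max_left _ _) hmax
  · refine tendsto_atBot_mono (fun n => ?_) (tendsto_atBot_add_const_right _ (-((1 - a) / 2)) hmax)
    linarith [le_max_right (q n).1 ((q n).2 + (1 - a) / 2)]
end

section
/- Let n, m ≥ 0 be integers and let w : {−n, −n+1, …, m} → {0,1} be an admissible word. Then there exists a finite orbit segment p₋ₙ, p₋ₙ₊₁, …, p_m of points of ℝ² such that p_{k+1} = f(p_k) for all −n ≤ k < m and p_k ∈ int R_{w(k)} for all −n ≤ k ≤ m. In particular every finite admissible itinerary is realized by a real orbit segment passing through the interiors of the corresponding rectangles. -/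
open Filter

open Set


lemma seg {g : ℝ → ℝ} {t₁ t₂ A B : ℝ} (h12 : t₁ ≤ t₂)
    (hg : ContinuousOn g (Icc t₁ t₂)) (hAB : A ≤ B)
    (hA : g t₁ ≤ A) (hB : B ≤ g t₂) :
    ∃ c d, t₁ ≤ c ∧ c ≤ d ∧ d ≤ t₂ ∧ g c = A ∧ g d = B ∧
      ∀ t ∈ Icc c d, A ≤ g t ∧ g t ≤ B := by
  have hBmem : B ∈ Icc (g t₁) (g t₂) := ⟨hA.trans hAB, hB⟩
  set S : Set ℝ := Icc t₁ t₂ ∩ g ⁻¹' {B} with hSdef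
  have hSne : S.Nonempty := by
    obtain ⟨x, hx, hgx⟩ := intermediate_value_Icc h12 hg hBmem
    exact ⟨x, hx, by simpa using hgx⟩
  have hSclosed : IsClosed S :=
    hg.preimage_isClosed_of_isClosed isClosed_Icc isClosed_singleton
  have hSbdd : BddBelow S := ⟨t₁, fun x hx => hx.1.1⟩
  set d := sInf S with hddef
  have hdS : d ∈ S := hSclosed.csInf_mem hSne hSbdd
  have hd1 : t₁ ≤ d := hdS.1.1
  have hd2 : d ≤ t₂ := hdS.1.2
  have hgd : g d = B := hdS.2
  have hle : ∀ t ∈ Icc t₁ d, g t ≤ B := by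
    intro t ht
    by_contra hgt
    push_neg at hgt
    have hsub : Icc t₁ t ⊆ Icc t₁ t₂ := Icc_subset_Icc le_rfl (ht.2.trans hd2)
    obtain ⟨x, hx, hgx⟩ := intermediate_value_Icc ht.1 (hg.mono hsub)
      ⟨hA.trans hAB, hgt.le⟩
    have hxS : x ∈ S := ⟨⟨hx.1, hx.2.trans (ht.2.trans hd2)⟩, by simpa using hgx⟩
    have : d ≤ x := csInf_le hSbdd hxS
    have hxt : x ≤ t := hx.2
    rcases eq_or_lt_of_le ht.2 with h | h
    · rw [h] at hgt; rw [hgd] at hgt; exact lt_irrefl _ hgt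
    · linarith
  -- now T
  have hgdmem : A ∈ Icc (g t₁) (g d) := ⟨hA, by rw [hgd]; exact hAB⟩
  have hsub1 : Icc t₁ d ⊆ Icc t₁ t₂ := Icc_subset_Icc le_rfl hd2
  set T : Set ℝ := Icc t₁ d ∩ g ⁻¹' {A} with hTdef
  have hTne : T.Nonempty := by
    obtain ⟨x, hx, hgx⟩ := intermediate_value_Icc hd1 (hg.mono hsub1) hgdmem
    exact ⟨x, hx, by simpa using hgx⟩
  have hTclosed : IsClosed T :=
    (hg.mono hsub1).preimage_isClosed_of_isClosed isClosed_Icc isClosed_singleton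
  have hTbdd : BddAbove T := ⟨d, fun x hx => hx.1.2⟩
  set c := sSup T with hcdef
  have hcT : c ∈ T := hTclosed.csSup_mem hTne hTbdd
  have hc1 : t₁ ≤ c := hcT.1.1
  have hc2 : c ≤ d := hcT.1.2
  have hgc : g c = A := hcT.2
  refine ⟨c, d, hc1, hc2, hd2, hgc, hgd, ?_⟩
  intro t ht
  constructor
  · by_contra hgt
    push_neg at hgt
    have hsub2 : Icc t d ⊆ Icc t₁ t₂ := Icc_subset_Icc (hc1.trans ht.1) hd2
    obtain ⟨x, hx, hgx⟩ := intermediate_value_Icc ht.2 (hg.mono hsub2)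
      ⟨hgt.le, by rw [hgd]; exact hAB⟩
    have hxT : x ∈ T := ⟨⟨(hc1.trans ht.1).trans hx.1, hx.2⟩, by simpa using hgx⟩
    have : x ≤ c := le_csSup hTbdd hxT
    rcases eq_or_lt_of_le ht.1 with h | h
    · rw [← h] at hgt; rw [hgc] at hgt; exact lt_irrefl _ hgt
    · linarith [hx.1]
  · exact hle t ⟨hc1.trans ht.1, ht.2⟩

lemma seg2 {g : ℝ → ℝ} {u v t₁ t₂ A B : ℝ} (hg : ContinuousOn g (Icc u v))
    (h1 : t₁ ∈ Icc u v) (h2 : t₂ ∈ Icc u v) (hAB : A ≤ B)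
    (hA : g t₁ ≤ A) (hB : B ≤ g t₂) :
    ∃ c d, c ≤ d ∧ Icc c d ⊆ Icc u v ∧
      (∃ x ∈ Icc c d, g x = A) ∧ (∃ x ∈ Icc c d, g x = B) ∧
      ∀ t ∈ Icc c d, A ≤ g t ∧ g t ≤ B := by
  rcases le_total t₁ t₂ with h | h
  · have hsub : Icc t₁ t₂ ⊆ Icc u v := Icc_subset_Icc h1.1 h2.2
    obtain ⟨c, d, hc, hcd, hd, hgc, hgd, hmem⟩ := seg h (hg.mono hsub) hAB hA hB
    exact ⟨c, d, hcd, fun x hx => hsub ⟨hc.trans hx.1, hx.2.trans hd⟩,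
      ⟨c, ⟨le_rfl, hcd⟩, hgc⟩, ⟨d, ⟨hcd, le_rfl⟩, hgd⟩, hmem⟩
  · have hsub : Icc t₂ t₁ ⊆ Icc u v := Icc_subset_Icc h2.1 h1.2
    have hneg : ContinuousOn (fun s => g (-s)) (Icc (-t₁) (-t₂)) := by
      apply (hg.mono hsub).comp continuous_neg.continuousOn
      intro s hs
      exact ⟨by simpa using neg_le_neg hs.2, by simpa using neg_le_neg hs.1⟩
    obtain ⟨c', d', hc', hcd', hd', hgc', hgd', hmem'⟩ :=
      seg (g := fun s => g (-s)) (neg_le_neg h) hneg hAB (by simpa using hA)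
        (by simpa using hB)
    refine ⟨-d', -c', by linarith, ?_, ⟨-c', ⟨neg_le_neg hcd', le_rfl⟩, by simpa using hgc'⟩,
      ⟨-d', ⟨le_rfl, neg_le_neg hcd'⟩, by simpa using hgd'⟩, ?_⟩
    · intro x hx
      have h1' : -x ∈ Icc c' d' := ⟨by linarith [hx.2], by linarith [hx.1]⟩
      have : -x ∈ Icc (-t₁) (-t₂) := ⟨hc'.trans h1'.1, h1'.2.trans hd'⟩
      exact hsub ⟨by linarith [this.2], by linarith [this.1]⟩
    · intro t ht
      have h1' : -t ∈ Icc c' d' := ⟨by linarith [ht.2], by linarith [ht.1]⟩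
      simpa using hmem' (-t) h1'

lemma fin2cases (i : Fin 2) : i = 0 ∨ i = 1 := by
  fin_cases i
  · exact Or.inl rfl
  · exact Or.inr rfl

lemma intRw_zero : intRw 0 = intRzero := rfl
lemma intRw_one : intRw 1 = intRone := rfl

lemma birat_biratInv (a : ℝ) (q : ℝ × ℝ) (h1 : q.2 + 1 ≠ 0) (h2 : q.2 - a ≠ 0) :
    birat a (biratInv a q) = q := by
  unfold birat biratInv
  rw [Prod.ext_iff]
  constructor
  · have e1 : (q.2 + 1 - a + a) = q.2 + 1 := by ring
    have e2 : q.2 + 1 - a - 1 = q.2 - a := by ring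
    rw [e1, e2]
    field_simp
  · ring

def GoodOrb (a : ℝ) (m : ℤ) (w : ℤ → Fin 2) (k : ℤ) (q : ℝ × ℝ) : Prop :=
  ∀ j : ℕ, k + (j : ℤ) ≤ m → (birat a)^[j] q ∈ intRw (w (k + (j : ℤ)))

lemma good_step {a : ℝ} {m : ℤ} {w : ℤ → Fin 2} {k : ℤ} {q pred : ℝ × ℝ}
    (hq : GoodOrb a m w k q) (hb : birat a pred = q)
    (h0 : pred ∈ intRw (w (k - 1))) : GoodOrb a m w (k - 1) pred := by
  intro j hj
  cases j with
  | zero => simpa using h0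
  | succ i =>
    rw [Function.iterate_succ_apply, hb]
    have he : k - 1 + ((i + 1 : ℕ) : ℤ) = k + (i : ℤ) := by push_cast; ring
    rw [he] at hj ⊢
    exact hq i hj

def Bd (a : ℝ) (m k : ℤ) : ℝ := -a + (1 - a) * ((m - k : ℤ) : ℝ)

def Inv0 (a Ym Yp : ℝ) (m : ℤ) (w : ℤ → Fin 2) (k : ℤ) : Prop :=
  ∃ u v : ℝ, u ≤ v ∧ ∃ γ : ℝ → ℝ × ℝ, ContinuousOn γ (Icc u v) ∧
    (∀ t ∈ Icc u v, GoodOrb a m w k (γ t) ∧ 1 < (γ t).1 ∧ (γ t).1 ≤ Bd a m k ∧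
      Ym ≤ (γ t).2 ∧ (γ t).2 ≤ Yp) ∧
    (∃ t ∈ Icc u v, (γ t).2 = Ym) ∧ (∃ t ∈ Icc u v, (γ t).2 = Yp)

def Inv1 (a Ym Yp : ℝ) (m : ℤ) (w : ℤ → Fin 2) (k : ℤ) : Prop :=
  ∃ u v : ℝ, u ≤ v ∧ ∃ γ : ℝ → ℝ × ℝ, ContinuousOn γ (Icc u v) ∧
    (∀ t ∈ Icc u v, GoodOrb a m w k (γ t) ∧ (γ t).1 < 0 ∧ 0 < (γ t).2 ∧
      (γ t).2 ≤ Bd a m k) ∧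
    (∃ t ∈ Icc u v, (γ t).1 * ((γ t).2 - a) / ((γ t).2 + 1) ≤ Ym) ∧
    (∃ t ∈ Icc u v, Yp ≤ (γ t).1 * ((γ t).2 - a) / ((γ t).2 + 1))

def InvW (a Ym Yp : ℝ) (m : ℤ) (w : ℤ → Fin 2) (k : ℤ) : Prop :=
  (w k = 0 ∧ Inv0 a Ym Yp m w k) ∨ (w k = 1 ∧ Inv1 a Ym Yp m w k)

def Consts (a Ym Yp βx : ℝ) : Prop :=
  Ym ≤ a - 2 ∧ (Ym + 1 - a) * ((βx - a) / (βx + 1)) ≤ Ym ∧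
  (Yp - a) / (Yp + 1) ≤ Ym ∧ a < Yp ∧ Yp < -1

lemma consts_exist (a : ℝ) (ha : a < -1) (βx : ℝ) (hβ : -a ≤ βx) :
    ∃ Ym Yp, Consts a Ym Yp βx := by
  have hβ1 : 1 < βx := by linarith
  have hden : (0:ℝ) < βx + 1 := by linarith
  set F : ℝ := (βx - a) / (βx + 1) with hFdef
  have hF : 1 < F := by rw [hFdef, lt_div_iff₀ hden]; linarith
  set Ym : ℝ := min (a - 2) ((-(1 - a)) * F / (F - 1)) with hYmdef
  have hYm1 : Ym ≤ a - 2 := min_le_left _ _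
  have hYm2 : (Ym + 1 - a) * F ≤ Ym := by
    have h1 : Ym ≤ (-(1 - a)) * F / (F - 1) := min_le_right _ _
    rw [le_div_iff₀ (by linarith)] at h1
    nlinarith
  set M : ℝ := max ((a + Ym) / (1 - Ym)) a with hMdef
  have hden2 : (0:ℝ) < 1 - Ym := by linarith
  have hM1 : M < -1 := by
    apply max_lt _ ha
    rw [div_lt_iff₀ hden2]; linarith
  set Yp : ℝ := (M - 1) / 2 with hYpdef
  have hMYp : M < Yp := by rw [hYpdef]; linarith
  have hYp5 : Yp < -1 := by rw [hYpdef]; linarith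
  have hYp4 : a < Yp := lt_of_le_of_lt (le_max_right _ _) hMYp
  have hYp1 : (Yp - a) / (Yp + 1) ≤ Ym := by
    have hr : (a + Ym) / (1 - Ym) < Yp := lt_of_le_of_lt (le_max_left _ _) hMYp
    rw [div_lt_iff₀ hden2] at hr
    rw [div_le_iff_of_neg (by linarith : Yp + 1 < 0)]
    nlinarith
  exact ⟨Ym, Yp, hYm1, hYm2, hYp1, hYp4, hYp5⟩

set_option maxHeartbeats 2000000 in
lemma inv_step {a Ym Yp : ℝ} (ha : a < -1) {n m : ℕ} {w : ℤ → Fin 2}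
    (hC : Consts a Ym Yp (Bd a (m : ℤ) (-(n : ℤ))))
    {k : ℤ} (hk1 : -(n : ℤ) < k) (hk2 : k ≤ (m : ℤ))
    (hadm1 : ¬(w (k - 1) = 1 ∧ w k = 1))
    (h : InvW a Ym Yp m w k) : InvW a Ym Yp m w (k - 1) := by
  obtain ⟨hYm1, hYm2, hYp1, hYp4, hYp5⟩ := hC
  set βx := Bd a (m : ℤ) (-(n : ℤ)) with hβxdef
  have hamk : (0:ℝ) ≤ ((m - k : ℤ) : ℝ) := by
    exact_mod_cast (by omega : (0:ℤ) ≤ (m : ℤ) - k)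
  have hBk_ge : -a ≤ Bd a m k := by
    have : (0:ℝ) ≤ (1 - a) * ((m - k : ℤ) : ℝ) := by nlinarith
    unfold Bd; linarith
  have hBk_le : Bd a m k ≤ βx := by
    rw [hβxdef]; unfold Bd
    have h1 : ((m - k : ℤ) : ℝ) ≤ (((m : ℤ) - -(n:ℤ) : ℤ) : ℝ) := by
      exact_mod_cast (by omega : (m : ℤ) - k ≤ (m : ℤ) - -(n:ℤ))
    nlinarith
  have hBk1 : 1 < Bd a m k := by linarith
  have hBsucc : Bd a m (k - 1) = Bd a m k + (1 - a) := by
    unfold Bd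
    have : ((m - (k - 1) : ℤ) : ℝ) = ((m - k : ℤ) : ℝ) + 1 := by push_cast; ring
    rw [this]; ring
  have hβx1 : 1 < βx := by linarith
  have hYmYp : Ym < Yp := by linarith
  rcases h with ⟨hw, hI⟩ | ⟨hw, hI⟩
  · -- w k = 0
    obtain ⟨u, v, huv, γ, hγ, hall, ⟨tm, htm, hym⟩, ⟨tp, htp, hyp⟩⟩ := hI
    rcases fin2cases (w (k - 1)) with hw' | hw'
    · -- Case A : 0 ← 0
      set g : ℝ → ℝ := fun t => (γ t).1 * ((γ t).2 - a) / ((γ t).2 + 1) with hgdef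
      have hgc : ContinuousOn g (Icc u v) := by
        apply ContinuousOn.div
        · exact (hγ.fst).mul ((hγ.snd).sub continuousOn_const)
        · exact (hγ.snd).add continuousOn_const
        · intro t ht
          have := (hall t ht).2.2.2.2
          intro h0; linarith
      have hA : g tp ≤ Ym := by
        have hx := (hall tp htp).2.1
        have hr : (Yp - a) / (Yp + 1) < 0 :=
          div_neg_of_pos_of_neg (by linarith) (by linarith)
        have : g tp = (γ tp).1 * ((Yp - a) / (Yp + 1)) := by
          rw [hgdef]; simp only; rw [hyp, mul_div_assoc]
        rw [this]
        nlinarith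
      have hB : Yp ≤ g tm := by
        have hx := (hall tm htm).2.1
        have hr : 0 < (Ym - a) / (Ym + 1) :=
          div_pos_of_neg_of_neg (by linarith) (by linarith)
        have : g tm = (γ tm).1 * ((Ym - a) / (Ym + 1)) := by
          rw [hgdef]; simp only; rw [hym, mul_div_assoc]
        rw [this]
        nlinarith
      obtain ⟨c, d, hcd, hsub, hexA, hexB, hrange⟩ :=
        seg2 hgc htp htm (le_of_lt hYmYp) hA hB
      refine Or.inl ⟨hw', c, d, hcd, fun t => biratInv a (γ t), ?_, ?_, ?_, ?_⟩
      · -- continuity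
        apply ContinuousOn.prodMk
        · exact (((hγ.mono hsub).snd).add continuousOn_const).sub continuousOn_const
        · apply ContinuousOn.div
          · exact ((hγ.mono hsub).fst).mul (((hγ.mono hsub).snd).sub continuousOn_const)
          · exact ((hγ.mono hsub).snd).add continuousOn_const
          · intro t ht
            have := (hall t (hsub ht)).2.2.2.2
            intro h0; linarith
      · intro t ht
        have ht' := hsub ht
        obtain ⟨hgood, hx1, hx2, hy1, hy2⟩ := hall t ht'
        obtain ⟨hr1, hr2⟩ := hrange t ht
        have hden : (γ t).2 + 1 < 0 := by linarith
        have hkey : g t * ((γ t).2 + 1) = (γ t).1 * ((γ t).2 - a) :=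
          div_mul_cancel₀ _ (ne_of_lt hden)
        have hgneg : g t < 0 := by linarith
        have hya : a < (γ t).2 := by nlinarith [mul_pos_of_neg_of_neg hgneg hden]
        have hmem : biratInv a (γ t) ∈ intRw (w (k - 1)) := by
          rw [hw', intRw_zero]
          refine ⟨?_, ?_⟩
          · show 1 < (γ t).2 + 1 - a; linarith
          · show (γ t).1 * ((γ t).2 - a) / ((γ t).2 + 1) < -1
            have : g t ≤ Yp := hr2
            rw [hgdef] at this; simp only at this; linarith
        refine ⟨good_step hgood (birat_biratInv a (γ t) (ne_of_lt hden)
            (ne_of_gt (by linarith))) hmem, ?_, ?_, hr1, hr2⟩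
        · show 1 < (γ t).2 + 1 - a; linarith
        · show (γ t).2 + 1 - a ≤ Bd a m (k - 1); linarith
      · exact hexA
      · exact hexB
    · -- Case B : 1 ← 0
      obtain ⟨s, hsdef⟩ : ∃ s : ℝ, s = a - 1 + Yp / (-(2*a)) := ⟨_, rfl⟩
      have h2a : (0:ℝ) < -(2*a) := by linarith
      have hs1 : a - 2 ≤ s := by
        have h1 : -1 * -(2*a) ≤ Yp := by linarith
        have h2 : -1 ≤ Yp / (-(2*a)) := by
          rw [le_div_iff₀ h2a]; linarith
        linarith [hsdef]
      have hs2 : s < a - 1 := by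
        have h3 : Yp / (-(2*a)) < 0 := div_neg_of_neg_of_pos (by linarith) h2a
        linarith [hsdef]
      have hyc : ContinuousOn (fun t => (γ t).2) (Icc u v) := hγ.snd
      have htm' : tm ∈ uIcc u v := by rw [uIcc_of_le huv]; exact htm
      have htp' : tp ∈ uIcc u v := by rw [uIcc_of_le huv]; exact htp
      have hsub0 : uIcc tm tp ⊆ Icc u v := by
        rw [← uIcc_of_le huv]; exact uIcc_subset_uIcc htm' htp'
      have hmemS : s ∈ uIcc ((fun t => (γ t).2) tm) ((fun t => (γ t).2) tp) := by
        simp only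
        rw [hym, hyp, uIcc_of_le (le_of_lt hYmYp)]
        exact ⟨by linarith, by linarith⟩
      obtain ⟨ts, hts, hyts⟩ := intermediate_value_uIcc (hyc.mono hsub0) hmemS
      have hts' : ts ∈ Icc u v := hsub0 hts
      obtain ⟨c, d, hcd, hsub, hexA, hexB, hrange⟩ :=
        seg2 hyc htm hts' (by linarith : Ym ≤ s) (le_of_eq hym) (le_of_eq hyts.symm)
      have hpt : ∀ t ∈ Icc c d, 0 < (biratInv a (γ t)).2 ∧
          (biratInv a (γ t)).2 ≤ Bd a m k := by
        intro t ht
        have ht' := hsub ht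
        obtain ⟨hgood, hx1, hx2, hy1, hy2⟩ := hall t ht'
        obtain ⟨hr1, hr2⟩ := hrange t ht
        have hden : (γ t).2 + 1 < 0 := by linarith
        have hnum : (γ t).2 - a < 0 := by linarith
        have hkey : (biratInv a (γ t)).2 * ((γ t).2 + 1) = (γ t).1 * ((γ t).2 - a) :=
          div_mul_cancel₀ _ (ne_of_lt hden)
        have hrhs : (γ t).1 * ((γ t).2 - a) < 0 :=
          mul_neg_of_pos_of_neg (by linarith) hnum
        constructor
        · nlinarith [hkey, hrhs, hden]
        · have e1 : Bd a m k * ((γ t).2 + 1) ≤ (γ t).1 * ((γ t).2 - a) := by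
            nlinarith
          nlinarith [hkey, e1, hden]
      refine Or.inr ⟨hw', c, d, hcd, fun t => biratInv a (γ t), ?_, ?_, ?_, ?_⟩
      · apply ContinuousOn.prodMk
        · exact (((hγ.mono hsub).snd).add continuousOn_const).sub continuousOn_const
        · apply ContinuousOn.div
          · exact ((hγ.mono hsub).fst).mul (((hγ.mono hsub).snd).sub continuousOn_const)
          · exact ((hγ.mono hsub).snd).add continuousOn_const
          · intro t ht
            have := (hrange t ht).2
            intro h0; linarith
      · intro t ht
        have ht' := hsub ht
        obtain ⟨hgood, hx1, hx2, hy1, hy2⟩ := hall t ht'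
        obtain ⟨hr1, hr2⟩ := hrange t ht
        obtain ⟨hP2, hP2b⟩ := hpt t ht
        have hden : (γ t).2 + 1 < 0 := by linarith
        have hnum : (γ t).2 - a < 0 := by linarith
        have hmem : biratInv a (γ t) ∈ intRw (w (k - 1)) := by
          rw [hw', intRw_one]
          exact ⟨by show (γ t).2 + 1 - a < 0; linarith, hP2⟩
        refine ⟨good_step hgood (birat_biratInv a (γ t) (ne_of_lt hden)
            (ne_of_lt hnum)) hmem, ?_, hP2, by linarith⟩
        show (γ t).2 + 1 - a < 0; linarith
      · -- H ≤ Ym at the point where y = Ym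
        obtain ⟨xA, hxA, hgxA⟩ := hexA
        obtain ⟨hY'pos, hY'le⟩ := hpt xA hxA
        obtain ⟨Y', hY'def⟩ : ∃ y : ℝ, (biratInv a (γ xA)).2 = y := ⟨_, rfl⟩
        rw [hY'def] at hY'pos hY'le
        have hY'βx : Y' ≤ βx := le_trans hY'le hBk_le
        have hden' : (0:ℝ) < Y' + 1 := by linarith
        have hF' : (βx - a) / (βx + 1) ≤ (Y' - a) / (Y' + 1) := by
          rw [div_le_div_iff₀ (by linarith) hden']
          nlinarith [(βx - Y') * (-(1 + a))]
        have hbase : Ym + 1 - a < 0 := by linarith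
        refine ⟨xA, hxA, ?_⟩
        have hp1 : (biratInv a (γ xA)).1 = Ym + 1 - a := by
          show (γ xA).2 + 1 - a = Ym + 1 - a; rw [hgxA]
        show (biratInv a (γ xA)).1 * ((biratInv a (γ xA)).2 - a) /
          ((biratInv a (γ xA)).2 + 1) ≤ Ym
        rw [hp1, hY'def]
        calc (Ym + 1 - a) * (Y' - a) / (Y' + 1)
            = (Ym + 1 - a) * ((Y' - a) / (Y' + 1)) := mul_div_assoc _ _ _
          _ ≤ (Ym + 1 - a) * ((βx - a) / (βx + 1)) := by nlinarith
          _ ≤ Ym := hYm2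
      · -- Yp ≤ H at the point where y = s
        obtain ⟨xB, hxB, hgxB⟩ := hexB
        obtain ⟨hY''pos, hY''le⟩ := hpt xB hxB
        obtain ⟨Y'', hY''def⟩ : ∃ y : ℝ, (biratInv a (γ xB)).2 = y := ⟨_, rfl⟩
        rw [hY''def] at hY''pos hY''le
        have hden'' : (0:ℝ) < Y'' + 1 := by linarith
        have hFle : (Y'' - a) / (Y'' + 1) ≤ -a := by
          rw [div_le_iff₀ hden'']
          nlinarith
        have hFpos : 0 < (Y'' - a) / (Y'' + 1) :=
          div_pos (by linarith) hden''
        refine ⟨xB, hxB, ?_⟩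
        have hp1 : (biratInv a (γ xB)).1 = Yp / (-(2*a)) := by
          show (γ xB).2 + 1 - a = Yp / (-(2*a))
          rw [hgxB, hsdef]; ring
        show Yp ≤ (biratInv a (γ xB)).1 * ((biratInv a (γ xB)).2 - a) /
          ((biratInv a (γ xB)).2 + 1)
        rw [hp1, hY''def]
        have hbase : Yp / (-(2*a)) < 0 := div_neg_of_neg_of_pos (by linarith) h2a
        have ha0 : a ≠ 0 := by intro h0; rw [h0] at ha; norm_num at ha
        have hhalf : Yp / (-(2*a)) * (-a) = Yp / 2 := by
          field_simp
        calc Yp ≤ Yp / 2 := by linarith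
          _ = Yp / (-(2*a)) * (-a) := hhalf.symm
          _ ≤ Yp / (-(2*a)) * ((Y'' - a) / (Y'' + 1)) := by nlinarith
          _ = Yp / (-(2*a)) * (Y'' - a) / (Y'' + 1) := (mul_div_assoc _ _ _).symm
  · -- w k = 1, Case C
    have hw' : w (k - 1) = 0 := by
      rcases fin2cases (w (k - 1)) with h0 | h1
      · exact h0
      · exact absurd ⟨h1, hw⟩ hadm1
    obtain ⟨u, v, huv, γ, hγ, hall, ⟨tA0, htA0, hHA⟩, ⟨tB0, htB0, hHB⟩⟩ := hI
    have hgc : ContinuousOn (fun t => (γ t).1 * ((γ t).2 - a) / ((γ t).2 + 1))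
        (Icc u v) := by
      apply ContinuousOn.div
      · exact (hγ.fst).mul ((hγ.snd).sub continuousOn_const)
      · exact (hγ.snd).add continuousOn_const
      · intro t ht
        have := (hall t ht).2.2.1
        intro h0; linarith
    obtain ⟨c, d, hcd, hsub, hexA, hexB, hrange⟩ :=
      seg2 hgc htA0 htB0 (le_of_lt hYmYp) hHA hHB
    refine Or.inl ⟨hw', c, d, hcd, fun t => biratInv a (γ t), ?_, ?_, ?_, ?_⟩
    · apply ContinuousOn.prodMk
      · exact (((hγ.mono hsub).snd).add continuousOn_const).sub continuousOn_const
      · apply ContinuousOn.div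
        · exact ((hγ.mono hsub).fst).mul (((hγ.mono hsub).snd).sub continuousOn_const)
        · exact ((hγ.mono hsub).snd).add continuousOn_const
        · intro t ht
          have := (hall t (hsub ht)).2.2.1
          intro h0; linarith
    · intro t ht
      have ht' := hsub ht
      obtain ⟨hgood, hx1, hy0, hyB⟩ := hall t ht'
      obtain ⟨hr1, hr2⟩ := hrange t ht
      have hden : (0:ℝ) < (γ t).2 + 1 := by linarith
      have hmem : biratInv a (γ t) ∈ intRw (w (k - 1)) := by
        rw [hw', intRw_zero]
        refine ⟨?_, ?_⟩
        · show 1 < (γ t).2 + 1 - a; linarith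
        · show (γ t).1 * ((γ t).2 - a) / ((γ t).2 + 1) < -1; linarith
      refine ⟨good_step hgood (birat_biratInv a (γ t) (ne_of_gt hden)
          (ne_of_gt (by linarith))) hmem, ?_, ?_, hr1, hr2⟩
      · show 1 < (γ t).2 + 1 - a; linarith
      · show (γ t).2 + 1 - a ≤ Bd a m (k - 1); linarith
    · exact hexA
    · exact hexB

lemma inv_base {a Ym Yp : ℝ} (ha : a < -1) {n m : ℕ} {w : ℤ → Fin 2}
    (hC : Consts a Ym Yp (Bd a (m : ℤ) (-(n : ℤ)))) :
    InvW a Ym Yp m w (m : ℤ) := by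
  obtain ⟨hYm1, hYm2, hYp1, hYp4, hYp5⟩ := hC
  have hBm : Bd a (m : ℤ) (m : ℤ) = -a := by
    unfold Bd; simp
  have hgood0 : ∀ q : ℝ × ℝ, q ∈ intRw (w (m:ℤ)) → GoodOrb a m w (m : ℤ) q := by
    intro q hq j hj
    have hj0 : j = 0 := by omega
    subst hj0
    simpa using hq
  rcases fin2cases (w (m : ℤ)) with hw | hw
  · refine Or.inl ⟨hw, Ym, Yp, by linarith, fun t => ((1 + -a)/2, t), ?_, ?_, ?_, ?_⟩
    · exact (continuousOn_const.prodMk continuousOn_id)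
    · intro t ht
      have hmem : ((1 + -a)/2, t) ∈ intRw (w (m:ℤ)) := by
        rw [hw, intRw_zero]
        exact ⟨by show (1:ℝ) < (1 + -a)/2; linarith,
          by show t < -1; exact lt_of_le_of_lt ht.2 hYp5⟩
      exact ⟨hgood0 _ hmem, by show (1:ℝ) < (1 + -a)/2; linarith,
        by rw [hBm]; show (1 + -a)/2 ≤ -a; linarith, ht.1, ht.2⟩
    · exact ⟨Ym, ⟨le_rfl, by linarith⟩, rfl⟩
    · exact ⟨Yp, ⟨by linarith, le_rfl⟩, rfl⟩
  · have h1a : (0:ℝ) < 1 - a := by linarith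
    refine Or.inr ⟨hw, 2*Ym/(1 - a), 2*Yp/(1 - a), ?_, fun t => (t, 1), ?_, ?_, ?_, ?_⟩
    · exact (div_le_div_iff_of_pos_right h1a).mpr (by linarith)
    · exact (continuousOn_id.prodMk continuousOn_const)
    · intro t ht
      have htneg : t < 0 := by
        have := ht.2
        have : 2*Yp/(1-a) < 0 := div_neg_of_neg_of_pos (by linarith) h1a
        linarith [ht.2]
      have hmem : ((t, (1:ℝ)) : ℝ × ℝ) ∈ intRw (w (m:ℤ)) := by
        rw [hw, intRw_one]
        exact ⟨htneg, one_pos⟩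
      exact ⟨hgood0 _ hmem, htneg, one_pos, by rw [hBm]; show (1:ℝ) ≤ -a; linarith⟩
    · refine ⟨2*Ym/(1 - a), ⟨le_rfl, (div_le_div_iff_of_pos_right h1a).mpr (by linarith)⟩, ?_⟩
      · show 2*Ym/(1-a) * ((1:ℝ) - a) / ((1:ℝ) + 1) ≤ Ym
        rw [div_mul_cancel₀ _ (ne_of_gt h1a)]
        linarith
    · refine ⟨2*Yp/(1 - a), ⟨(div_le_div_iff_of_pos_right h1a).mpr (by linarith), le_rfl⟩, ?_⟩
      · show Yp ≤ 2*Yp/(1-a) * ((1:ℝ) - a) / ((1:ℝ) + 1)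
        rw [div_mul_cancel₀ _ (ne_of_gt h1a)]
        linarith

lemma inv_all {a Ym Yp : ℝ} (ha : a < -1) {n m : ℕ} {w : ℤ → Fin 2}
    (hC : Consts a Ym Yp (Bd a (m : ℤ) (-(n : ℤ))))
    (hadm : ∀ k : ℤ, -(n : ℤ) ≤ k → k + 1 ≤ (m : ℤ) → ¬(w k = 1 ∧ w (k + 1) = 1)) :
    ∀ j : ℕ, (j : ℤ) ≤ (m : ℤ) + (n : ℤ) → InvW a Ym Yp m w ((m : ℤ) - j) := by
  intro j
  induction j with
  | zero => intro _; simpa using inv_base ha hC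
  | succ i ih =>
    intro hj
    have hih := ih (by push_cast at hj ⊢; omega)
    have hk1 : -(n : ℤ) < (m : ℤ) - i := by push_cast at hj; omega
    have hk2 : (m : ℤ) - i ≤ (m : ℤ) := by omega
    have hpair : ¬(w ((m : ℤ) - i - 1) = 1 ∧ w ((m : ℤ) - i) = 1) := by
      have := hadm ((m : ℤ) - i - 1) (by omega) (by omega)
      have he : (m : ℤ) - i - 1 + 1 = (m : ℤ) - i := by ring
      rw [he] at this
      exact this
    have := inv_step ha hC hk1 hk2 hpair hih
    have he : (m : ℤ) - i - 1 = (m : ℤ) - (i + 1 : ℕ) := by push_cast; ring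
    rwa [he] at this

theorem stmt5 (a : ℝ) (ha : a < -1) (n m : ℕ) (w : ℤ → Fin 2)
    (hadm : ∀ k : ℤ, -(n : ℤ) ≤ k → k + 1 ≤ (m : ℤ) → ¬(w k = 1 ∧ w (k + 1) = 1)) :
    ∃ p : ℤ → ℝ × ℝ,
      (∀ k : ℤ, -(n : ℤ) ≤ k → k < (m : ℤ) → p (k + 1) = birat a (p k)) ∧
      (∀ k : ℤ, -(n : ℤ) ≤ k → k ≤ (m : ℤ) → p k ∈ intRw (w k)) := by
  have hβ : -a ≤ Bd a (m : ℤ) (-(n : ℤ)) := by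
    unfold Bd
    have h0 : (0:ℝ) ≤ (((m : ℤ) - -(n:ℤ) : ℤ) : ℝ) := by
      exact_mod_cast (by omega : (0:ℤ) ≤ (m : ℤ) - -(n:ℤ))
    nlinarith
  obtain ⟨Ym, Yp, hC⟩ := consts_exist a ha _ hβ
  have hInv := inv_all ha hC hadm (m + n) (by push_cast; omega)
  have he : (m : ℤ) - ((m + n : ℕ) : ℤ) = -(n : ℤ) := by push_cast; ring
  rw [he] at hInv
  have hGood : ∃ q : ℝ × ℝ, GoodOrb a m w (-(n : ℤ)) q := by
    rcases hInv with ⟨_, u, v, huv, γ, _, hall, _⟩ | ⟨_, u, v, huv, γ, _, hall, _⟩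
    · exact ⟨γ u, (hall u ⟨le_rfl, huv⟩).1⟩
    · exact ⟨γ u, (hall u ⟨le_rfl, huv⟩).1⟩
  obtain ⟨q, hq⟩ := hGood
  refine ⟨fun k => (birat a)^[(k + n).toNat] q, ?_, ?_⟩
  · intro k hk1 hk2
    have he1 : (k + 1 + (n:ℤ)).toNat = (k + n).toNat + 1 := by omega
    show (birat a)^[(k + 1 + (n:ℤ)).toNat] q = birat a ((birat a)^[(k + (n:ℤ)).toNat] q)
    rw [he1, Function.iterate_succ_apply']
  · intro k hk1 hk2
    have he2 : ((k + (n:ℤ)).toNat : ℤ) = k + n := by omega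
    have := hq (k + (n:ℤ)).toNat (by omega)
    rwa [show -(n:ℤ) + ((k + (n:ℤ)).toNat : ℤ) = k by omega] at this
end

section
/- (Invariance of the unstable cone field.) Suppose p = (x,y) ∈ R₀ ∪ R₁ and that q = (x′,y′) := f(p) is defined and lies in (R₀ ∪ R₁) ∩ ℝ². Let v = (v₁,v₂) be a nonzero vector of ℝ² belonging to the cone Ĉᵘ_p, meaning: if p ∈ R₀ then v₁ ≠ 0, v₁v₂ ≤ 0 and y·v₁² ≤ (x−1)·v₁v₂ (v points weakly between the direction of the line joining (1,0) to p and the horizontal direction); if p ∈ R₁ then y·v₁² ≤ (x−1)·v₁v₂ (v points weakly between the vertical direction and the direction of the line joining (1,0) to p). Then u = (u₁,u₂) := Df_p(v), the image of v under the total derivative of f at p, belongs to the cone Cᵘ_q, meaning: if q ∈ R₀ then u₁ ≠ 0, u₁u₂ ≤ 0 and (y′+1)·u₁² ≤ x′·u₁u₂; if q ∈ R₁ then (y′+1)·u₁² ≤ x′·u₁u₂ (the cone Cᵘ is defined analogously to Ĉᵘ with the point (0,−1) in place of (1,0)). -/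
set_option maxHeartbeats 1000000

open Filter

lemma birat_fderiv_apply (a : ℝ) (p : ℝ × ℝ) (h : p.1 - 1 ≠ 0) (v : ℝ × ℝ) :
    fderiv ℝ (birat a) p v =
      (-(1 + a) * p.2 / (p.1 - 1) ^ 2 * v.1 + (p.1 + a) / (p.1 - 1) * v.2, v.1) := by
  have hg : HasDerivAt (fun t : ℝ => (t + a) / (t - 1))
      ((1 * (p.1 - 1) - (p.1 + a) * 1) / (p.1 - 1) ^ 2) p.1 :=
    ((hasDerivAt_id p.1).add_const a).div ((hasDerivAt_id p.1).sub_const 1) h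
  have hgf := hg.hasFDerivAt.comp p (hasFDerivAt_fst (𝕜 := ℝ) (E := ℝ) (F := ℝ) (p := p))
  have hmul := (hasFDerivAt_snd (𝕜 := ℝ) (E := ℝ) (F := ℝ) (p := p)).mul hgf
  have h3 : HasFDerivAt (fun q : ℝ × ℝ => q.1 + a - 1)
      (ContinuousLinearMap.fst ℝ ℝ ℝ) p :=
    ((hasFDerivAt_fst (𝕜 := ℝ) (E := ℝ) (F := ℝ) (p := p)).add_const a).sub_const 1
  have hprod := hmul.prodMk h3
  have heq : birat a = fun q : ℝ × ℝ => (q.2 * ((q.1 + a) / (q.1 - 1)), q.1 + a - 1) := by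
    funext q; simp [birat, mul_div_assoc]
  have hprod' : HasFDerivAt (fun q : ℝ × ℝ => (q.2 * ((q.1 + a) / (q.1 - 1)), q.1 + a - 1))
      ((p.2 • (ContinuousLinearMap.smulRight (1 : ℝ →L[ℝ] ℝ)
            ((1 * (p.1 - 1) - (p.1 + a) * 1) / (p.1 - 1) ^ 2)).comp
          (ContinuousLinearMap.fst ℝ ℝ ℝ) +
        ((p.1 + a) / (p.1 - 1)) • ContinuousLinearMap.snd ℝ ℝ ℝ).prod
        (ContinuousLinearMap.fst ℝ ℝ ℝ)) p := by
    simpa [Function.comp, ContinuousLinearMap.smulRight_one_eq_toSpanSingleton] using hprod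
  rw [heq, hprod'.fderiv]
  simp [ContinuousLinearMap.prod_apply, smul_eq_mul]
  field_simp
  ring

/-- The main cone inequality, reduced to polynomials. -/
lemma final_ineq (x y a v1 v2 : ℝ) (hs : x - 1 ≠ 0)
    (key : (-(1 + a) * y * v1 + (x + a) * (x - 1) * v2) * ((x - 1) * v2 - y * v1) ≤ 0) :
    (x + a - 1 + 1) * (-(1 + a) * y / (x - 1) ^ 2 * v1 + (x + a) / (x - 1) * v2) ^ 2 ≤
      y * (x + a) / (x - 1) * ((-(1 + a) * y / (x - 1) ^ 2 * v1 + (x + a) / (x - 1) * v2) * v1) := by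
  have h4 : (0 : ℝ) < (x - 1) ^ 4 := by positivity
  have hA : (x + a - 1 + 1) * (-(1 + a) * y / (x - 1) ^ 2 * v1 + (x + a) / (x - 1) * v2) ^ 2
      = ((x + a) * (-(1 + a) * y * v1 + (x + a) * (x - 1) * v2) ^ 2) / (x - 1) ^ 4 := by
    field_simp; ring
  have hB : y * (x + a) / (x - 1) *
        ((-(1 + a) * y / (x - 1) ^ 2 * v1 + (x + a) / (x - 1) * v2) * v1)
      = (y * (x + a) * (x - 1) * (-(1 + a) * y * v1 + (x + a) * (x - 1) * v2) * v1) /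
        (x - 1) ^ 4 := by
    field_simp
  rw [hA, hB, div_le_div_iff₀ h4 h4]
  nlinarith [mul_nonneg (mul_nonneg (sq_nonneg (x + a)) (neg_nonneg.2 key)) (le_of_lt h4),
    sq_nonneg ((x + a) * (x - 1) ^ 2)]

theorem stmt7 (a : ℝ) (ha : a < -1) (p : ℝ × ℝ) (hp : p ∈ Rzero ∪ Rone)
    (hdef : p.1 ≠ 1) (hq : birat a p ∈ Rzero ∪ Rone) (v : ℝ × ℝ) (hv : v ≠ 0)
    (hcone0 : p ∈ Rzero →
      v.1 ≠ 0 ∧ v.1 * v.2 ≤ 0 ∧ p.2 * v.1 ^ 2 ≤ (p.1 - 1) * (v.1 * v.2))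
    (hcone1 : p ∈ Rone → p.2 * v.1 ^ 2 ≤ (p.1 - 1) * (v.1 * v.2)) :
    (birat a p ∈ Rzero →
      (fderiv ℝ (birat a) p v).1 ≠ 0 ∧
      (fderiv ℝ (birat a) p v).1 * (fderiv ℝ (birat a) p v).2 ≤ 0 ∧
      ((birat a p).2 + 1) * (fderiv ℝ (birat a) p v).1 ^ 2 ≤
        (birat a p).1 * ((fderiv ℝ (birat a) p v).1 * (fderiv ℝ (birat a) p v).2)) ∧
    (birat a p ∈ Rone →
      ((birat a p).2 + 1) * (fderiv ℝ (birat a) p v).1 ^ 2 ≤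
        (birat a p).1 * ((fderiv ℝ (birat a) p v).1 * (fderiv ℝ (birat a) p v).2)) := by
  have hs : p.1 - 1 ≠ 0 := sub_ne_zero.2 hdef
  have hder := birat_fderiv_apply a p hs v
  rw [hder]
  simp only [Set.mem_union, Rzero, Rone, Set.mem_setOf_eq, birat] at hp hcone0 hcone1 ⊢
  set x := p.1 with hxdef
  set y := p.2 with hydef
  set v1 := v.1 with hv1def
  set v2 := v.2 with hv2def
  have hueq : -(1 + a) * y / (x - 1) ^ 2 * v1 + (x + a) / (x - 1) * v2
      = (-(1 + a) * y * v1 + (x + a) * (x - 1) * v2) / (x - 1) ^ 2 := by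
    field_simp
  have hs2 : (0 : ℝ) < (x - 1) ^ 2 := by positivity
  constructor
  · rintro ⟨hq1, hq2⟩
    -- q ∈ R₀ : 1 ≤ y(x+a)/(x-1),  x+a ≤ 0
    have hc0 : x + a ≤ 0 := by linarith
    have main : (-(1 + a) * y * v1 + (x + a) * (x - 1) * v2) ≠ 0 ∧
        (-(1 + a) * y * v1 + (x + a) * (x - 1) * v2) * v1 ≤ 0 ∧
        (-(1 + a) * y * v1 + (x + a) * (x - 1) * v2) * ((x - 1) * v2 - y * v1) ≤ 0 := by
      rcases hp with ⟨hx1, hy1⟩ | ⟨hx1, hy1⟩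
      · -- p ∈ R₀
        obtain ⟨hv1ne, hvv, hcone⟩ := hcone0 ⟨hx1, hy1⟩
        have hxgt : 1 < x := lt_of_le_of_ne hx1 (Ne.symm hdef)
        have hv1sq : 0 < v1 ^ 2 :=
          lt_of_le_of_ne (sq_nonneg v1) (Ne.symm (pow_ne_zero 2 hv1ne))
        have h1 : (x + a) * ((x - 1) * (v1 * v2) - y * v1 ^ 2) ≤ 0 :=
          mul_nonpos_of_nonpos_of_nonneg hc0 (by linarith)
        have h2 : 0 < ((x - 1) * (-y)) * v1 ^ 2 :=
          mul_pos (mul_pos (by linarith) (by linarith)) hv1sq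
        have hUv : (-(1 + a) * y * v1 + (x + a) * (x - 1) * v2) * v1 < 0 := by nlinarith
        have hTv : 0 ≤ ((x - 1) * v2 - y * v1) * v1 := by nlinarith [hcone]
        refine ⟨left_ne_zero_of_mul hUv.ne, hUv.le, ?_⟩
        nlinarith [mul_nonpos_of_nonpos_of_nonneg hUv.le hTv, hv1sq]
      · -- p ∈ R₁
        obtain hcone := hcone1 ⟨hx1, hy1⟩
        have hxlt : x - 1 < 0 := by linarith
        have hcne : x + a < 0 := by linarith
        have hylt : 0 < y := by
          rcases lt_or_eq_of_le hy1 with h | h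
          · exact h
          · exfalso; rw [← h] at hq1; simp at hq1; linarith
        rcases eq_or_ne v1 0 with h0 | hv1ne
        · have hv2ne : v2 ≠ 0 := by
            intro h2
            apply hv
            have hvpair : v = (v1, v2) := rfl
            rw [hvpair, h0, h2]; rfl
          refine ⟨?_, ?_, ?_⟩
          · rw [h0]
            have : -(1 + a) * y * 0 + (x + a) * (x - 1) * v2 = (x + a) * ((x - 1) * v2) := by
              ring
            rw [this]
            exact mul_ne_zero (ne_of_lt hcne) (mul_ne_zero hxlt.ne hv2ne)
          · rw [h0]
            have : (-(1 + a) * y * 0 + (x + a) * (x - 1) * v2) * 0 = 0 := by ring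
            rw [this]
          · rw [h0]; nlinarith [sq_nonneg ((x - 1) * v2)]
        · have hv1sq : 0 < v1 ^ 2 :=
            lt_of_le_of_ne (sq_nonneg v1) (Ne.symm (pow_ne_zero 2 hv1ne))
          have h1 : (x + a) * ((x - 1) * (v1 * v2) - y * v1 ^ 2) ≤ 0 :=
            mul_nonpos_of_nonpos_of_nonneg hc0 (by linarith)
          have h2 : 0 < ((1 - x) * y) * v1 ^ 2 :=
            mul_pos (mul_pos (by linarith) hylt) hv1sq
          have hUv : (-(1 + a) * y * v1 + (x + a) * (x - 1) * v2) * v1 < 0 := by nlinarith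
          have hTv : 0 ≤ ((x - 1) * v2 - y * v1) * v1 := by nlinarith [hcone]
          refine ⟨left_ne_zero_of_mul hUv.ne, hUv.le, ?_⟩
          nlinarith [mul_nonpos_of_nonpos_of_nonneg hUv.le hTv, hv1sq]
    obtain ⟨hUne, hUvle, key⟩ := main
    refine ⟨?_, ?_, ?_⟩
    · rw [hueq]; exact div_ne_zero hUne (ne_of_gt hs2)
    · rw [hueq, div_mul_eq_mul_div]
      exact div_nonpos_iff.2 (Or.inr ⟨hUvle, hs2.le⟩)
    · exact final_ineq x y a v1 v2 hs key
  · rintro ⟨hq1, hq2⟩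
    -- q ∈ R₁ : y(x+a)/(x-1) ≤ 0,  1 ≤ x+a
    have hc1 : 1 ≤ x + a := by linarith
    rcases hp with ⟨hx1, hy1⟩ | ⟨hx1, hy1⟩
    · -- p ∈ R₀
      obtain ⟨hv1ne, hvv, hcone⟩ := hcone0 ⟨hx1, hy1⟩
      have hxgt : 1 < x := lt_of_le_of_ne hx1 (Ne.symm hdef)
      have hv1sq : 0 < v1 ^ 2 :=
        lt_of_le_of_ne (sq_nonneg v1) (Ne.symm (pow_ne_zero 2 hv1ne))
      have h1 : 0 < (-(1 + a) * (-y)) * v1 ^ 2 :=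
        mul_pos (mul_pos (by linarith) (by linarith)) hv1sq
      have h2 : (x + a) * (x - 1) * (v1 * v2) ≤ 0 :=
        mul_nonpos_of_nonneg_of_nonpos (by nlinarith) hvv
      have hUv : (-(1 + a) * y * v1 + (x + a) * (x - 1) * v2) * v1 < 0 := by nlinarith
      have hTv : 0 ≤ ((x - 1) * v2 - y * v1) * v1 := by nlinarith [hcone]
      have key : (-(1 + a) * y * v1 + (x + a) * (x - 1) * v2) *
          ((x - 1) * v2 - y * v1) ≤ 0 := by
        nlinarith [mul_nonpos_of_nonpos_of_nonneg hUv.le hTv, hv1sq]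
      exact final_ineq x y a v1 v2 hs key
    · -- p ∈ R₁ : impossible since x + a < -1
      exfalso; linarith
end

section
/- (Strict invariance of the unstable cone field under f².) Suppose p = (x,y), f(p), and r = (x″,y″) := f²(p) are all defined and lie in (R₀ ∪ R₁) ∩ ℝ². Let v = (v₁,v₂) be a nonzero vector of ℝ² in the cone Cᵘ_p, meaning: if p ∈ R₀ then v₁ ≠ 0, v₁v₂ ≤ 0 and (y+1)·v₁² ≤ x·v₁v₂; if p ∈ R₁ then (y+1)·v₁² ≤ x·v₁v₂ (Cᵘ_p is the closed cone of directions lying weakly between the horizontal (resp. vertical) direction and the direction of the line joining (0,−1) to p). Then u = (u₁,u₂) := D(f²)_p(v) lies strictly inside the cone Cᵘ_r: if r ∈ R₀ then u₁u₂ < 0 and (y″+1)·u₁² < x″·u₁u₂; if r ∈ R₁ then u₁ ≠ 0 and (y″+1)·u₁² < x″·u₁u₂. -/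
open Filter

noncomputable def Dmap (a : ℝ) (s : ℝ × ℝ) : ℝ × ℝ →L[ℝ] ℝ × ℝ :=
  (((-s.2 * (1 + a) / (s.1 - 1) ^ 2) • ContinuousLinearMap.fst ℝ ℝ ℝ) +
   (((s.1 + a) / (s.1 - 1)) • ContinuousLinearMap.snd ℝ ℝ ℝ)).prod
    (ContinuousLinearMap.fst ℝ ℝ ℝ)

lemma Dmap_apply (a : ℝ) (s v : ℝ × ℝ) :
    Dmap a s v = (-s.2 * (1 + a) / (s.1 - 1) ^ 2 * v.1 + (s.1 + a) / (s.1 - 1) * v.2, v.1) := by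
  simp [Dmap]

lemma hasFDerivAt_birat (a : ℝ) (s : ℝ × ℝ) (h : s.1 ≠ 1) :
    HasFDerivAt (birat a) (Dmap a s) s := by
  have hne : s.1 - 1 ≠ 0 := sub_ne_zero.mpr h
  have h1 := (hasFDerivAt_snd (𝕜 := ℝ) (E := ℝ) (F := ℝ) (p := s)).mul
      ((hasFDerivAt_fst (𝕜 := ℝ) (E := ℝ) (F := ℝ) (p := s)).add_const a)
  have h2 : HasFDerivAt (fun p : ℝ × ℝ => p.1 - 1) (ContinuousLinearMap.fst ℝ ℝ ℝ) s :=
    (hasFDerivAt_fst).sub_const 1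
  have hinv := (hasDerivAt_inv hne).comp_hasFDerivAt s h2
  simp only [Function.comp_def] at hinv
  have h3 := h1.mul hinv
  have h4 : HasFDerivAt (fun p : ℝ × ℝ => p.1 + a - 1) (ContinuousLinearMap.fst ℝ ℝ ℝ) s :=
    ((hasFDerivAt_fst).add_const a).sub_const 1
  have h5 := h3.prodMk h4
  have heq : (fun x : ℝ × ℝ => (x.2 * (x.1 + a) * (x.1 - 1)⁻¹, x.1 + a - 1)) = birat a := by
    funext p; simp [birat, div_eq_mul_inv]
  simp only [Pi.mul_def] at h5
  rw [heq] at h5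
  have hL : (((s.2 * (s.1 + a)) • (-((s.1 - 1) ^ 2)⁻¹ • ContinuousLinearMap.fst ℝ ℝ ℝ) +
          (s.1 - 1)⁻¹ • (s.2 • ContinuousLinearMap.fst ℝ ℝ ℝ + (s.1 + a) • ContinuousLinearMap.snd ℝ ℝ ℝ)).prod
      (ContinuousLinearMap.fst ℝ ℝ ℝ)) = Dmap a s := by
    refine ContinuousLinearMap.ext fun v => ?_
    refine Prod.ext ?_ ?_
    · simp [Dmap]
      field_simp
      ring
    · simp [Dmap]
  rw [hL] at h5
  exact h5

lemma auxA (a x y v1 v2 : ℝ) (ha : a < -1) (hx : 1 < x) (hy : y ≤ -1) (h1 : 0 < v1)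
    (hvv : v1 * v2 ≤ 0) (hE : (y + 1) * v1 ^ 2 ≤ x * (v1 * v2))
    (hcase : x + a < 0 ∨ 1 ≤ x + a) :
    -y * (1 + a) * v1 + (x + a) * (x - 1) * v2 < 0 ∧ y * v1 - (x - 1) * v2 < 0 := by
  have hx0 : (0:ℝ) < x := by linarith
  have hv2 : v2 ≤ 0 := by nlinarith
  have hE' : (y + 1) * v1 ≤ x * v2 := by nlinarith
  have hA : 0 ≤ (x - 1) * (x * v2 - (y + 1) * v1) := by
    apply mul_nonneg <;> linarith
  have hB : 0 < v1 * (x - y - 1) := mul_pos h1 (by linarith)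
  constructor
  · -- P < 0
    rcases hcase with hc | hc
    · have hD : 0 < x ^ 2 - 2 * x - a := by nlinarith [sq_nonneg (x - 1)]
      have hbr : y * (x ^ 2 - 2 * x - a) + (x - 1) * (x + a) ≤ x * (1 + a) := by
        nlinarith [mul_nonneg (show (0:ℝ) ≤ -1 - y by linarith) hD.le]
      have e1 : v1 * (y * (x ^ 2 - 2 * x - a) + (x - 1) * (x + a)) ≤ v1 * (x * (1 + a)) :=
        mul_le_mul_of_nonneg_left hbr h1.le
      have e2 : v1 * (x * (1 + a)) < 0 :=
        mul_neg_of_pos_of_neg h1 (by nlinarith)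
      have hC : (x + a) * ((x - 1) * (x * v2 - (y + 1) * v1)) ≤ 0 :=
        mul_nonpos_of_nonpos_of_nonneg hc.le hA
      have idP : x * (-y * (1 + a) * v1 + (x + a) * (x - 1) * v2)
          = v1 * (y * (x ^ 2 - 2 * x - a) + (x - 1) * (x + a))
            + (x + a) * ((x - 1) * (x * v2 - (y + 1) * v1)) := by ring
      nlinarith [e1, e2, hC, idP, hx0]
    · have t1 : -y * (1 + a) * v1 < 0 := by
        have : 0 < (-y) * (-(1 + a)) := mul_pos (by linarith) (by linarith)
        nlinarith
      have t2 : (x + a) * (x - 1) * v2 ≤ 0 := by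
        apply mul_nonpos_of_nonneg_of_nonpos _ hv2
        apply mul_nonneg <;> linarith
      linarith
  · -- Q < 0
    have idQ : x * (y * v1 - (x - 1) * v2)
        = -(v1 * (x - y - 1)) - (x - 1) * (x * v2 - (y + 1) * v1) := by ring
    nlinarith [hA, hB, idQ, hx0]

lemma auxB (a x y v1 v2 : ℝ) (ha : a < -1) (hx : x ≤ 0) (hy : 0 ≤ y) (h1 : 0 < v1)
    (hE : (y + 1) * v1 ^ 2 ≤ x * (v1 * v2)) :
    -y * (1 + a) * v1 + (x + a) * (x - 1) * v2 < 0 ∧ y * v1 - (x - 1) * v2 < 0 := by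
  have hE' : (y + 1) * v1 ≤ x * v2 := by nlinarith
  have hxv : 0 < x * v2 := by nlinarith
  have hxneg : x < 0 := by
    rcases lt_or_eq_of_le hx with h | h
    · exact h
    · exfalso; rw [h] at hxv; simp at hxv
  have hv2 : v2 < 0 := by nlinarith
  have hA : 0 ≤ (1 - x) * (x * v2 - (y + 1) * v1) := by
    apply mul_nonneg <;> linarith
  constructor
  · -- P < 0 via x*P ≥ positive
    have hD : 0 < x ^ 2 - 2 * x - a := by nlinarith [sq_nonneg (x - 1)]
    have hbr : 0 < y * (x ^ 2 - 2 * x - a) + (x - 1) * (x + a) := by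
      have : 0 < (x - 1) * (x + a) := mul_pos_of_neg_of_neg (by linarith) (by linarith)
      nlinarith [mul_nonneg hy hD.le]
    have idP : x * (-y * (1 + a) * v1 + (x + a) * (x - 1) * v2)
        = v1 * (y * (x ^ 2 - 2 * x - a) + (x - 1) * (x + a))
          - (x + a) * ((x - 1) * ((y + 1) * v1 - x * v2)) := by ring
    have hC : 0 ≤ (-(x + a)) * ((1 - x) * (x * v2 - (y + 1) * v1)) :=
      mul_nonneg (by linarith) hA
    have hxP : 0 < x * (-y * (1 + a) * v1 + (x + a) * (x - 1) * v2) := by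
      nlinarith [mul_pos h1 hbr, hC, idP]
    by_contra hcon
    push_neg at hcon
    nlinarith [mul_nonneg hcon (le_of_lt (neg_pos.mpr hxneg))]
  · -- Q < 0 via x*Q > 0
    have idQ : x * (y * v1 - (x - 1) * v2)
        = v1 * (y + 1 - x) + (x - 1) * ((y + 1) * v1 - x * v2) := by ring
    have hxQ : 0 < x * (y * v1 - (x - 1) * v2) := by
      nlinarith [mul_pos h1 (show (0:ℝ) < y + 1 - x by linarith), hA]
    by_contra hcon
    push_neg at hcon
    nlinarith [mul_nonneg hcon (le_of_lt (neg_pos.mpr hxneg))]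

set_option maxHeartbeats 800000 in
lemma key (a x y x' y' v1 v2 w1 : ℝ) (ha : a < -1) (hx1 : x ≠ 1)
    (hx' : x' = y * (x + a) / (x - 1)) (hy' : y' = x + a - 1)
    (hw : w1 = -y * (1 + a) / (x - 1) ^ 2 * v1 + (x + a) / (x - 1) * v2)
    (hs : (1 ≤ x ∧ y ≤ -1) ∨ (x ≤ 0 ∧ 0 ≤ y))
    (ht : (1 ≤ x' ∧ y' ≤ -1) ∨ (x' ≤ 0 ∧ 0 ≤ y'))
    (hv : v1 ≠ 0 ∨ v2 ≠ 0)
    (hc0 : 1 ≤ x ∧ y ≤ -1 → v1 ≠ 0 ∧ v1 * v2 ≤ 0 ∧ (y + 1) * v1 ^ 2 ≤ x * (v1 * v2))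
    (hc1 : x ≤ 0 ∧ 0 ≤ y → (y + 1) * v1 ^ 2 ≤ x * (v1 * v2)) :
    0 < x' * (w1 * v1) - (y' + 1) * w1 ^ 2 ∧ (v1 ≠ 0 → w1 * v1 < 0) := by
  have hxm : x - 1 ≠ 0 := sub_ne_zero.mpr hx1
  have hid : x' * (w1 * v1) - (y' + 1) * w1 ^ 2
      = (x + a) ^ 2 / ((x - 1) ^ 2) ^ 2 *
        ((-y * (1 + a) * v1 + (x + a) * (x - 1) * v2) * (y * v1 - (x - 1) * v2)) := by
    rw [hx', hy', hw]
    field_simp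
    ring
  have hwv : w1 * v1 = (-y * (1 + a) * v1 + (x + a) * (x - 1) * v2) * v1 / (x - 1) ^ 2 := by
    rw [hw]; field_simp
  have main : (x + a ≠ 0 ∧
      0 < (-y * (1 + a) * v1 + (x + a) * (x - 1) * v2) * (y * v1 - (x - 1) * v2)) ∧
      (v1 ≠ 0 → (-y * (1 + a) * v1 + (x + a) * (x - 1) * v2) * v1 < 0) := by
    rcases hs with ⟨hsx, hsy⟩ | ⟨hsx, hsy⟩
    · -- p in R0
      have hxgt : 1 < x := hsx.lt_of_ne (Ne.symm hx1)
      obtain ⟨hv1, hvv, hE⟩ := hc0 ⟨hsx, hsy⟩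
      have hcase : x + a < 0 ∨ 1 ≤ x + a := by
        rcases ht with ⟨ht1, ht2⟩ | ⟨ht1, ht2⟩
        · left
          have h0 : x + a ≤ 0 := by rw [hy'] at ht2; linarith
          rcases h0.lt_or_eq with h | h
          · exact h
          · exfalso
            rw [hx', h] at ht1
            norm_num at ht1
        · right; rw [hy'] at ht2; linarith
      have hxa : x + a ≠ 0 := by rcases hcase with h | h <;> intro h0 <;> linarith
      rcases hv1.lt_or_gt with h1 | h1
      · obtain ⟨hP, hQ⟩ := auxA a x y (-v1) (-v2) ha hxgt hsy (by linarith)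
          (by nlinarith) (by nlinarith) hcase
        have hP' : 0 < -y * (1 + a) * v1 + (x + a) * (x - 1) * v2 := by nlinarith
        have hQ' : 0 < y * v1 - (x - 1) * v2 := by nlinarith
        exact ⟨⟨hxa, mul_pos hP' hQ'⟩, fun _ => mul_neg_of_pos_of_neg hP' h1⟩
      · obtain ⟨hP, hQ⟩ := auxA a x y v1 v2 ha hxgt hsy h1 hvv hE hcase
        exact ⟨⟨hxa, mul_pos_of_neg_of_neg hP hQ⟩, fun _ => mul_neg_of_neg_of_pos hP h1⟩
    · -- p in R1
      have hE := hc1 ⟨hsx, hsy⟩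
      have hxa : x + a ≠ 0 := by intro h0; linarith
      rcases eq_or_ne v1 0 with h1 | h1
      · have hv2 : v2 ≠ 0 := hv.resolve_left (fun hh => hh h1)
        refine ⟨⟨hxa, ?_⟩, fun h => absurd h1 h⟩
        have hPQ : (-y * (1 + a) * v1 + (x + a) * (x - 1) * v2) * (y * v1 - (x - 1) * v2)
            = (-(x + a)) * ((x - 1) ^ 2 * v2 ^ 2) := by
          rw [h1]; ring
        rw [hPQ]
        exact mul_pos (by linarith) (mul_pos (pow_two_pos_of_ne_zero hxm)
          (pow_two_pos_of_ne_zero hv2))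
      · rcases h1.lt_or_gt with h1 | h1
        · obtain ⟨hP, hQ⟩ := auxB a x y (-v1) (-v2) ha hsx hsy (by linarith) (by nlinarith)
          have hP' : 0 < -y * (1 + a) * v1 + (x + a) * (x - 1) * v2 := by nlinarith
          have hQ' : 0 < y * v1 - (x - 1) * v2 := by nlinarith
          exact ⟨⟨hxa, mul_pos hP' hQ'⟩, fun _ => mul_neg_of_pos_of_neg hP' h1⟩
        · obtain ⟨hP, hQ⟩ := auxB a x y v1 v2 ha hsx hsy h1 hE
          exact ⟨⟨hxa, mul_pos_of_neg_of_neg hP hQ⟩, fun _ => mul_neg_of_neg_of_pos hP h1⟩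
  obtain ⟨⟨hxa, hPQ⟩, hPv⟩ := main
  constructor
  · rw [hid]
    exact mul_pos (div_pos (pow_two_pos_of_ne_zero hxa)
      (pow_two_pos_of_ne_zero (pow_ne_zero 2 hxm))) hPQ
  · intro h
    rw [hwv]
    exact div_neg_of_neg_of_pos (hPv h) (pow_two_pos_of_ne_zero hxm)

theorem stmt8 (a : ℝ) (ha : a < -1) (p : ℝ × ℝ) (hp : p ∈ Rzero ∪ Rone)
    (hdef : p.1 ≠ 1) (hdef2 : (birat a p).1 ≠ 1)
    (hfp : birat a p ∈ Rzero ∪ Rone) (hr : birat a (birat a p) ∈ Rzero ∪ Rone)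
    (v : ℝ × ℝ) (hv : v ≠ 0)
    (hcone0 : p ∈ Rzero →
      v.1 ≠ 0 ∧ v.1 * v.2 ≤ 0 ∧ (p.2 + 1) * v.1 ^ 2 ≤ p.1 * (v.1 * v.2))
    (hcone1 : p ∈ Rone → (p.2 + 1) * v.1 ^ 2 ≤ p.1 * (v.1 * v.2)) :
    (birat a (birat a p) ∈ Rzero →
      (fderiv ℝ (birat a ∘ birat a) p v).1 * (fderiv ℝ (birat a ∘ birat a) p v).2 < 0 ∧
      ((birat a (birat a p)).2 + 1) * (fderiv ℝ (birat a ∘ birat a) p v).1 ^ 2 <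
        (birat a (birat a p)).1 *
          ((fderiv ℝ (birat a ∘ birat a) p v).1 * (fderiv ℝ (birat a ∘ birat a) p v).2)) ∧
    (birat a (birat a p) ∈ Rone →
      (fderiv ℝ (birat a ∘ birat a) p v).1 ≠ 0 ∧
      ((birat a (birat a p)).2 + 1) * (fderiv ℝ (birat a ∘ birat a) p v).1 ^ 2 <
        (birat a (birat a p)).1 *
          ((fderiv ℝ (birat a ∘ birat a) p v).1 * (fderiv ℝ (birat a ∘ birat a) p v).2)) := by
  set q := birat a p with hqdef
  set r := birat a q with hrdef
  have hq1 : q.1 = p.2 * (p.1 + a) / (p.1 - 1) := rfl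
  have hq2 : q.2 = p.1 + a - 1 := rfl
  have hr1 : r.1 = q.2 * (q.1 + a) / (q.1 - 1) := rfl
  have hr2 : r.2 = q.1 + a - 1 := rfl
  have hs : (1 ≤ p.1 ∧ p.2 ≤ -1) ∨ (p.1 ≤ 0 ∧ 0 ≤ p.2) := by
    rcases hp with h | h
    · exact Or.inl h
    · exact Or.inr h
  have ht : (1 ≤ q.1 ∧ q.2 ≤ -1) ∨ (q.1 ≤ 0 ∧ 0 ≤ q.2) := by
    rcases hfp with h | h
    · exact Or.inl h
    · exact Or.inr h
  have hrt : (1 ≤ r.1 ∧ r.2 ≤ -1) ∨ (r.1 ≤ 0 ∧ 0 ≤ r.2) := by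
    rcases hr with h | h
    · exact Or.inl h
    · exact Or.inr h
  have hvne : v.1 ≠ 0 ∨ v.2 ≠ 0 := by
    by_contra hcon
    push_neg at hcon
    exact hv (Prod.ext hcon.1 hcon.2)
  set w1 : ℝ := -p.2 * (1 + a) / (p.1 - 1) ^ 2 * v.1 + (p.1 + a) / (p.1 - 1) * v.2 with hw1def
  obtain ⟨H1a, H1b⟩ := key a p.1 p.2 q.1 q.2 v.1 v.2 w1 ha hdef hq1 hq2 hw1def hs ht hvne
    (fun h => hcone0 h) (fun h => hcone1 h)
  have hw1ne : w1 ≠ 0 := by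
    intro h0
    rw [h0] at H1a
    simp at H1a
  have hwv1le : w1 * v.1 ≤ 0 := by
    rcases eq_or_ne v.1 0 with h | h
    · rw [h]; simp
    · exact (H1b h).le
  set u1 : ℝ := -q.2 * (1 + a) / (q.1 - 1) ^ 2 * w1 + (q.1 + a) / (q.1 - 1) * v.1 with hu1def
  obtain ⟨H2a, H2b⟩ := key a q.1 q.2 r.1 r.2 w1 v.1 u1 ha hdef2 hr1 hr2 hu1def ht hrt
    (Or.inl hw1ne)
    (fun _ => ⟨hw1ne, hwv1le, by linarith⟩)
    (fun _ => by linarith)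
  have hD1 := hasFDerivAt_birat a p hdef
  have hD2 := hasFDerivAt_birat a q hdef2
  have hcomp : HasFDerivAt (birat a ∘ birat a) ((Dmap a q).comp (Dmap a p)) p :=
    hD2.comp p hD1
  have happ : fderiv ℝ (birat a ∘ birat a) p v = (u1, w1) := by
    rw [hcomp.fderiv, ContinuousLinearMap.comp_apply, Dmap_apply, Dmap_apply]
  rw [happ]
  constructor
  · intro hmem
    have hm : 1 ≤ r.1 ∧ r.2 ≤ -1 := hmem
    refine ⟨H2b hw1ne, ?_⟩
    simpa using H2a
  · intro hmem
    have hm : r.1 ≤ 0 ∧ 0 ≤ r.2 := hmem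
    have hu1ne : u1 ≠ 0 := by
      intro h0
      rw [h0] at H2a
      simp at H2a
    refine ⟨hu1ne, ?_⟩
    simpa using H2a
end

section
/- Let p ∈ ℝ² be such that for every n ≥ 0 the forward orbit of p is defined up to time n and fⁿ(p) ∈ R₀ ∪ R₁. Then for every K ≥ 0 there exists n ≥ K such that fⁿ(p) ∈ R₀ and f^{n+1}(p) ∈ R₀; that is, the itinerary of p through the rectangles R₀, R₁ is not eventually alternating, and the block R₀R₀ occurs at arbitrarily late times. -/
open Filter

lemma monoPos (s u w : ℝ) (hs : 0 ≤ s) (hu : 0 ≤ u) (hw : 0 ≤ w) :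
    0 ≤ s*w^2*(s-u)^2 +
      (3*(s^0*u^0*w^1) + 5*(s^0*u^0*w^2) + 2*(s^0*u^0*w^3) + 4*(s^0*u^1*w^1) +
       6*(s^0*u^1*w^2) + 2*(s^0*u^1*w^3) + 1*(s^0*u^2*w^1) + 1*(s^0*u^2*w^2) +
       6*(s^1*u^0*w^0) + 12*(s^1*u^0*w^1) + 6*(s^1*u^0*w^2) + 2*(s^1*u^1*w^0) +
       5*(s^1*u^1*w^1) + 3*(s^1*u^1*w^2) + 1*(s^1*u^2*w^1) + 12*(s^2*u^0*w^0) +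
       13*(s^2*u^0*w^1) + 2*(s^2*u^0*w^2) + 4*(s^2*u^1*w^0) + 1*(s^2*u^1*w^1) +
       6*(s^3*u^0*w^0) + 4*(s^3*u^0*w^1) + 2*(s^3*u^1*w^0)) := by
  have mono : ∀ (c : ℝ), 0 ≤ c → ∀ i j k : ℕ, 0 ≤ c * (s^i*u^j*w^k) := by
    intro c hc i j k
    exact mul_nonneg hc (mul_nonneg (mul_nonneg (pow_nonneg hs i) (pow_nonneg hu j)) (pow_nonneg hw k))
  have h1 : 0 ≤ s*w^2*(s-u)^2 := mul_nonneg (mul_nonneg hs (sq_nonneg w)) (sq_nonneg _)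
  have h2 := mono 3 (by norm_num) 0 0 1
  refine add_nonneg h1 ?_
  repeat' apply add_nonneg
  all_goals exact mono _ (by norm_num) _ _ _

lemma keyStep (A α y α' y' : ℝ) (hA : 1 < A) (hα : 0 ≤ α) (hy : 1 ≤ y) (hy' : 1 ≤ y')
    (h1 : y' * (α + A) = (α + A) + (y + A) * (α + 1))
    (h2 : α' * y' = α * (y' + A - 1) - (1 + A) * y') :
    α'/y' + 2/y' ≤ α/y ∧ y' ≤ y + 1 + A := by
  have hy0 : (0:ℝ) < y := by linarith
  have hy'0 : (0:ℝ) < y' := by linarith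
  have hD : (0:ℝ) < α + A := by linarith
  constructor
  · have hN : 0 ≤ α*(A-1)^2*(α-(y-1))^2 +
      (3*(α^0*(y-1)^0*(A-1)^1) + 5*(α^0*(y-1)^0*(A-1)^2) + 2*(α^0*(y-1)^0*(A-1)^3) + 4*(α^0*(y-1)^1*(A-1)^1) +
       6*(α^0*(y-1)^1*(A-1)^2) + 2*(α^0*(y-1)^1*(A-1)^3) + 1*(α^0*(y-1)^2*(A-1)^1) + 1*(α^0*(y-1)^2*(A-1)^2) +
       6*(α^1*(y-1)^0*(A-1)^0) + 12*(α^1*(y-1)^0*(A-1)^1) + 6*(α^1*(y-1)^0*(A-1)^2) + 2*(α^1*(y-1)^1*(A-1)^0) +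
       5*(α^1*(y-1)^1*(A-1)^1) + 3*(α^1*(y-1)^1*(A-1)^2) + 1*(α^1*(y-1)^2*(A-1)^1) + 12*(α^2*(y-1)^0*(A-1)^0) +
       13*(α^2*(y-1)^0*(A-1)^1) + 2*(α^2*(y-1)^0*(A-1)^2) + 4*(α^2*(y-1)^1*(A-1)^0) + 1*(α^2*(y-1)^1*(A-1)^1) +
       6*(α^3*(y-1)^0*(A-1)^0) + 4*(α^3*(y-1)^0*(A-1)^1) + 2*(α^3*(y-1)^1*(A-1)^0)) :=
      monoPos α (y-1) (A-1) hα (by linarith) (by linarith)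
    have main : (α'+2)*y*(y'*(α+A)^2) ≤ α*y'*(y'*(α+A)^2) := by
      have hmain : α*y'*(y'*(α+A)^2) - (α'+2)*y*(y'*(α+A)^2) =
          α*(A-1)^2*(α-(y-1))^2 +
      (3*(α^0*(y-1)^0*(A-1)^1) + 5*(α^0*(y-1)^0*(A-1)^2) + 2*(α^0*(y-1)^0*(A-1)^3) + 4*(α^0*(y-1)^1*(A-1)^1) +
       6*(α^0*(y-1)^1*(A-1)^2) + 2*(α^0*(y-1)^1*(A-1)^3) + 1*(α^0*(y-1)^2*(A-1)^1) + 1*(α^0*(y-1)^2*(A-1)^2) +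
       6*(α^1*(y-1)^0*(A-1)^0) + 12*(α^1*(y-1)^0*(A-1)^1) + 6*(α^1*(y-1)^0*(A-1)^2) + 2*(α^1*(y-1)^1*(A-1)^0) +
       5*(α^1*(y-1)^1*(A-1)^1) + 3*(α^1*(y-1)^1*(A-1)^2) + 1*(α^1*(y-1)^2*(A-1)^1) + 12*(α^2*(y-1)^0*(A-1)^0) +
       13*(α^2*(y-1)^0*(A-1)^1) + 2*(α^2*(y-1)^0*(A-1)^2) + 4*(α^2*(y-1)^1*(A-1)^0) + 1*(α^2*(y-1)^1*(A-1)^1) +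
       6*(α^3*(y-1)^0*(A-1)^0) + 4*(α^3*(y-1)^0*(A-1)^1) + 2*(α^3*(y-1)^1*(A-1)^0)) := by
        linear_combination (α*((α+A) + (y+A)*(α+1)) + α*y'*(α+A) - y*α*(α+A) + (A-1)*y*(α+A)) * h1
          - y*(α+A)^2 * h2
      linarith [hN, hmain]
    have hpos : (0:ℝ) < y'*(α+A)^2 := by positivity
    have h3 : (α'+2)*y ≤ α*y' := le_of_mul_le_mul_right main hpos
    rw [← add_div, div_le_div_iff₀ hy'0 hy0]
    linarith [h3]
  · have e : (y+1+A-y')*(α+A) = (y+A)*(A-1) := by linear_combination -h1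
    nlinarith [e, mul_nonneg (show (0:ℝ) ≤ y+A by linarith) (show (0:ℝ) ≤ A-1 by linarith), hD]

theorem stmt12 (a : ℝ) (ha : a < -1) (p : ℝ × ℝ)
    (hp : ∀ n : ℕ, orbitDefined a p n ∧ (birat a)^[n] p ∈ Rzero ∪ Rone) :
    ∀ K : ℕ, ∃ n : ℕ, K ≤ n ∧ (birat a)^[n] p ∈ Rzero ∧ (birat a)^[n + 1] p ∈ Rzero := by
  by_contra hcon
  push_neg at hcon
  obtain ⟨K, hK⟩ := hcon
  set q : ℕ → ℝ × ℝ := fun n => (birat a)^[n] p with hqdef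
  have hmem : ∀ n, q n ∈ Rzero ∪ Rone := fun n => (hp n).2
  have hstep : ∀ n, q (n+1) = birat a (q n) := fun n => Function.iterate_succ_apply' _ _ _
  have hY : ∀ n, (q (n+1)).2 = (q n).1 + a - 1 := fun n => by rw [hstep n]; rfl
  have hXf : ∀ n, (q (n+1)).1 = (q n).2 * ((q n).1 + a) / ((q n).1 - 1) := fun n => by
    rw [hstep n]; rfl
  have hz : ∀ n, q n ∈ Rzero → 1 ≤ (q n).1 ∧ (q n).2 ≤ -1 := fun n h => h
  have ho : ∀ n, q n ∈ Rone → (q n).1 ≤ 0 ∧ 0 ≤ (q n).2 := fun n h => h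
  -- R1 is followed by R0
  have r1r0 : ∀ n, q n ∈ Rone → q (n+1) ∈ Rzero := by
    intro n h
    rcases hmem (n+1) with h' | h'
    · exact h'
    · exfalso
      have h2 := (ho _ h').2
      rw [hY n] at h2
      have := (ho _ h).1
      linarith
  -- after K, R0 is followed by R1
  have r0r1 : ∀ n, K ≤ n → q n ∈ Rzero → q (n+1) ∈ Rone := by
    intro n hn h
    rcases hmem (n+1) with h' | h'
    · exact absurd h' (hK n hn h)
    · exact h'
  -- find a base point m ≥ K in Rzero
  obtain ⟨m, hmK, hm⟩ : ∃ m, K ≤ m ∧ q m ∈ Rzero := by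
    rcases hmem K with h | h
    · exact ⟨K, le_refl K, h⟩
    · exact ⟨K+1, Nat.le_succ K, r1r0 K h⟩
  -- alternation
  have halt : ∀ k, q (m+2*k) ∈ Rzero ∧ q (m+2*k+1) ∈ Rone := by
    intro k
    induction k with
    | zero => exact ⟨by simpa using hm, by simpa using r0r1 m hmK hm⟩
    | succ k ih =>
      have h0 : q (m+2*k+2) ∈ Rzero := r1r0 _ ih.2
      have h1 : q (m+2*k+3) ∈ Rone := r0r1 _ (by omega) h0
      constructor
      · have e : m+2*(k+1) = m+2*k+2 := by ring
        rw [e]; exact h0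
      · have e : m+2*(k+1)+1 = m+2*k+3 := by ring
        rw [e]; exact h1
  have hA : (1:ℝ) < -a := by linarith
  set α : ℕ → ℝ := fun k => (q (m+2*k+3)).2 with hαdef
  set y : ℕ → ℝ := fun k => a - (q (m+2*k+2)).2 with hydef
  have hα : ∀ k, 0 ≤ α k := by
    intro k
    have h := (halt (k+1)).2
    have e : m+2*(k+1)+1 = m+2*k+3 := by ring
    rw [e] at h
    exact (ho _ h).2
  have hy1 : ∀ k, 1 ≤ y k := by
    intro k
    have h := (halt k).2
    have h1 := (ho _ h).1
    have h2 := hY (m+2*k+1)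
    have e : m+2*k+1+1 = m+2*k+2 := by ring
    rw [e] at h2
    simp only [hydef]
    linarith [h2, h1]
  have hyne : ∀ k, y k ≠ 0 := fun k => by linarith [hy1 k]
  have hypos : ∀ k, (0:ℝ) < y k := fun k => by linarith [hy1 k]
  -- X at even positions
  have hXn : ∀ k, (q (m+2*k+2)).1 = α k + 1 + -a := by
    intro k
    have h := hY (m+2*k+2)
    have e : m+2*k+2+1 = m+2*k+3 := by ring
    rw [e] at h
    simp only [hαdef]
    linarith [h]
  -- X at odd positions
  have hQ1 : ∀ k, (q (m+2*k+3)).1 = 1 - y (k+1) := by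
    intro k
    have h := hY (m+2*k+3)
    have e : m+2*k+3+1 = m+2*(k+1)+2 := by ring
    rw [e] at h
    simp only [hydef]
    linarith [h]
  have hdne : ∀ k, α k + -a ≠ 0 := fun k => by have := hα k; have : (0:ℝ) < α k + -a := by linarith
                                               linarith
  have hrec1 : ∀ k, y (k+1) * (α k + -a) = (α k + -a) + (y k + -a) * (α k + 1) := by
    intro k
    have h := hXf (m+2*k+2)
    have e : m+2*k+2+1 = m+2*k+3 := by ring
    rw [e, hQ1 k, hXn k] at h
    have hv : (q (m+2*k+2)).2 = a - y k := by simp only [hydef]; ring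
    rw [hv] at h
    have hd : α k + 1 + -a - 1 = α k + -a := by ring
    have ha2 : α k + 1 + -a + a = α k + 1 := by ring
    rw [hd, ha2] at h
    -- h : 1 - y (k+1) = (a - y k) * (α k + 1) / (α k + -a)
    field_simp [hdne k] at h
    first
    | linear_combination -h
    | linear_combination h
  have hrec2 : ∀ k, α (k+1) * y (k+1) = α k * (y (k+1) + -a - 1) - (1 + -a) * y (k+1) := by
    intro k
    have h := hXf (m+2*k+3)
    have e : m+2*k+3+1 = m+2*(k+1)+2 := by ring
    rw [e, hXn (k+1), hQ1 k] at h
    have hv : (q (m+2*k+3)).2 = α k := by simp only [hαdef]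
    rw [hv] at h
    -- h : α (k+1) + 1 + -a = α k * (1 - y (k+1) + a) / (1 - y (k+1) - 1)
    have hd : 1 - y (k+1) - 1 = -(y (k+1)) := by ring
    rw [hd] at h
    have hne : -(y (k+1)) ≠ 0 := by simpa using hyne (k+1)
    rw [eq_div_iff hne] at h
    first
    | linear_combination -h
    | linear_combination h
  -- apply keyStep
  have hkey : ∀ k, α (k+1)/(y (k+1)) + 2/(y (k+1)) ≤ α k / y k ∧ y (k+1) ≤ y k + 1 + -a :=
    fun k => keyStep (-a) (α k) (y k) (α (k+1)) (y (k+1)) hA (hα k) (hy1 k) (hy1 (k+1))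
      (hrec1 k) (hrec2 k)
  set c : ℝ := 2/((1 + -a)*(2 + -a)) with hcdef
  have ha1 : (0:ℝ) < 1 + -a := by linarith
  have ha2 : (0:ℝ) < 2 + -a := by linarith
  have hc : 0 < c := by rw [hcdef]; exact div_pos (by norm_num) (mul_pos ha1 ha2)
  have hφ : ∀ k, α (k+1)/y (k+1) + c*Real.log (y (k+1)) ≤ α k / y k + c*Real.log (y k) := by
    intro k
    have hkey1 := (hkey k).1
    have hgrow := (hkey k).2
    have hy0 := hypos k
    have hy'0 := hypos (k+1)
    have hlog : Real.log (y (k+1)) - Real.log (y k) ≤ (y (k+1) - y k)/(y k) := by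
      rw [← Real.log_div (ne_of_gt hy'0) (ne_of_gt hy0)]
      have h5 := Real.log_le_sub_one_of_pos (div_pos hy'0 hy0)
      have e : y (k+1)/y k - 1 = (y (k+1) - y k)/y k := by field_simp
      rw [e] at h5
      exact h5
    have h6 : c * ((y (k+1) - y k)/y k) ≤ 2/(y (k+1)) := by
      have hb : y (k+1) - y k ≤ 1 + -a := by linarith
      have h7 : c * ((y (k+1) - y k)/y k) ≤ c * ((1 + -a)/y k) := by
        apply mul_le_mul_of_nonneg_left _ (le_of_lt hc)
        gcongr
      have h8 : c * ((1 + -a)/y k) = 2/((2 + -a)*y k) := by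
        rw [hcdef]; field_simp
      have h9 : 2/((2 + -a)*y k) ≤ 2/(y (k+1)) := by
        rw [div_le_div_iff₀ (mul_pos ha2 hy0) hy'0]
        nlinarith [hy1 k, hgrow]
      linarith
    have h10 : c*(Real.log (y (k+1)) - Real.log (y k)) ≤ c*((y (k+1) - y k)/y k) :=
      mul_le_mul_of_nonneg_left hlog (le_of_lt hc)
    nlinarith [hkey1, h6, h10]
  have hφ0 : ∀ k, α k/y k + c*Real.log (y k) ≤ α 0/y 0 + c*Real.log (y 0) := by
    intro k
    induction k with
    | zero => exact le_refl _
    | succ k ih => exact le_trans (hφ k) ih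
  have hψpos : ∀ k, 0 ≤ α k / y k := fun k => div_nonneg (hα k) (le_of_lt (hypos k))
  set L : ℝ := (α 0/y 0 + c*Real.log (y 0))/c with hLdef
  have hyM : ∀ k, y k ≤ Real.exp L := by
    intro k
    have hcL : c*L = α 0/y 0 + c*Real.log (y 0) := by
      rw [hLdef]; field_simp
    have h1 : c*Real.log (y k) ≤ c*L := by
      have h2 := hφ0 k
      have h3 := hψpos k
      linarith
    have h2 : Real.log (y k) ≤ L := le_of_mul_le_mul_left (by linarith) hc
    calc y k = Real.exp (Real.log (y k)) := (Real.exp_log (hypos k)).symm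
      _ ≤ Real.exp L := Real.exp_le_exp.mpr h2
  have hM : 0 < Real.exp L := Real.exp_pos L
  have hdec : ∀ k, α (k+1)/y (k+1) ≤ α k/y k - 2/Real.exp L := by
    intro k
    have h1 := (hkey k).1
    have h2 : 2/Real.exp L ≤ 2/(y (k+1)) := by
      rw [div_le_div_iff₀ hM (hypos (k+1))]
      nlinarith [hyM (k+1)]
    linarith
  have hiter : ∀ k : ℕ, α k/y k ≤ α 0/y 0 - k*(2/Real.exp L) := by
    intro k
    induction k with
    | zero => simp
    | succ k ih =>
      have h1 := hdec k
      have e : ((k:ℝ)+1)*(2/Real.exp L) = k*(2/Real.exp L) + 2/Real.exp L := by ring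
      push_cast
      rw [e]
      linarith
  obtain ⟨k, hk⟩ := exists_nat_gt ((α 0/y 0)*Real.exp L/2)
  have h2M : (0:ℝ) < 2/Real.exp L := by positivity
  have hfin : α 0/y 0 < k*(2/Real.exp L) := by
    have h1 := mul_lt_mul_of_pos_right hk h2M
    have e : (α 0/y 0)*Real.exp L/2*(2/Real.exp L) = α 0/y 0 := by
      field_simp [hyne 0, Real.exp_ne_zero L]
    linarith
  have h1 := hiter k
  have h2 := hψpos k
  linarith
end

section
/- (Asymptotics of f² near the parabolic fixed point at infinity.) There exist constants C > 0 and C′ > 0 such that for every (x,y) ∈ ℝ² with |x| > C and |y| > C: x ≠ 1, the first coordinate of f(x,y) is ≠ 1 (so f²(x,y) is defined), and writing (x₂,y₂) := f²(x,y), one has |x₂ − x·(1 + (a−1)/x + (a+1)/y)| ≤ C′·|x|·(1/x² + 1/y²) and |y₂ − y·(1 + (a−1)/y + (a+1)/x)| ≤ C′·|y|/x². -/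
open Filter

/-! Both coordinates of `f²` are rational in `(x, y)`, and the two error terms are, in closed form,
`(a + 1) (x² - x - y (2x + a - 1)) / (y (y (x + a) - (x - 1)))` and `y (a + 1) / (x (x - 1))`.
Once `|x|, |y| > 4|a| + 8`, the triangle inequality bounds each numerator above and each
denominator below by a fixed fraction of its leading monomial. -/
section

variable {a x y : ℝ}

lemma birat_fst_sub_one (hx : x ≠ 1) :
    (birat a (x, y)).1 - 1 = (y * (x + a) - (x - 1)) / (x - 1) := by
  rw [birat, div_sub_one (sub_ne_zero.mpr hx)]

lemma birat_birat_fst_sub (hx0 : x ≠ 0) (hx : x ≠ 1) (hy : y ≠ 0)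
    (hD : y * (x + a) - (x - 1) ≠ 0) :
    (birat a (birat a (x, y))).1 - x * (1 + (a - 1) / x + (a + 1) / y) =
      (a + 1) * (x ^ 2 - x - y * (2 * x + a - 1)) / (y * (y * (x + a) - (x - 1))) := by
  have hx1 : x - 1 ≠ 0 := sub_ne_zero.mpr hx
  have hD' : (x + a) * y - (x - 1) ≠ 0 := by rwa [mul_comm]
  simp only [birat]
  rw [div_sub_one hx1]
  field_simp
  ring

lemma birat_birat_snd_sub (hx0 : x ≠ 0) (hx : x ≠ 1) (hy : y ≠ 0) :
    (birat a (birat a (x, y))).2 - y * (1 + (a - 1) / y + (a + 1) / x) =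
      y * (a + 1) / (x * (x - 1)) := by
  have hx1 : x - 1 ≠ 0 := sub_ne_zero.mpr hx
  simp only [birat]
  field_simp
  ring

lemma sq_div_two_le_abs_mul_sub_one (hx : 2 ≤ |x|) : x ^ 2 / 2 ≤ |x * (x - 1)| := by
  have h := abs_sub_abs_le_abs_sub x 1
  rw [abs_one] at h
  rw [abs_mul, ← sq_abs x]
  nlinarith

lemma abs_mul_abs_div_two_le_birat_denom (hax : 4 * |a| ≤ |x|) (hx : 1 ≤ |x|) (hy : 8 ≤ |y|) :
    |x| * |y| / 2 ≤ |y * (x + a) - (x - 1)| := by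
  have hxa : |x| - |a| ≤ |x + a| := by simpa using abs_sub_abs_le_abs_sub x (-a)
  have hx1 : |x - 1| ≤ |x| + 1 := by simpa using abs_sub x 1
  have h := abs_sub_abs_le_abs_sub (y * (x + a)) (x - 1)
  rw [abs_mul] at h
  nlinarith [mul_le_mul_of_nonneg_left hxa (abs_nonneg y)]

lemma abs_birat_birat_fst_numer_le (hx : 8 ≤ |x|) (hy : 8 ≤ |y|) (hay : 4 * |a| ≤ |y|) :
    |x ^ 2 - x - y * (2 * x + a - 1)| ≤ 4 * (x ^ 2 + y ^ 2) := by
  have h2x : |2 * x + a - 1| ≤ 2 * |x| + |a| + 1 := by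
    calc |2 * x + a - 1| ≤ |2 * x| + |a| + |(-1 : ℝ)| := by
          simpa [sub_eq_add_neg] using abs_add_three (2 * x) a (-1)
      _ = 2 * |x| + |a| + 1 := by simp [abs_mul]
  have h := abs_sub (x ^ 2 - x) (y * (2 * x + a - 1))
  have hxx := abs_sub (x ^ 2) x
  rw [abs_mul] at h
  rw [abs_pow] at hxx
  nlinarith [mul_le_mul_of_nonneg_left h2x (abs_nonneg y), sq_abs x, sq_abs y,
    sq_nonneg (|x| - |y|), abs_nonneg a]

lemma abs_add_one_le_abs_add_one : |a + 1| ≤ |a| + 1 :=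
  (abs_add_le a 1).trans_eq (by rw [abs_one])

lemma ne_one_of_large (hx : 4 * |a| + 8 < |x|) : x ≠ 1 := by
  rintro rfl
  norm_num at hx
  linarith [abs_nonneg a]

lemma birat_denom_ne_zero_of_large (hx : 4 * |a| + 8 < |x|) (hy : 4 * |a| + 8 < |y|) :
    y * (x + a) - (x - 1) ≠ 0 := by
  have ha := abs_nonneg a
  have hD := abs_mul_abs_div_two_le_birat_denom (a := a) (x := x) (y := y)
    (by linarith) (by linarith) (by linarith)
  intro h
  rw [h, abs_zero] at hD
  nlinarith [mul_pos (by linarith : (0 : ℝ) < |x|) (by linarith : (0 : ℝ) < |y|)]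

lemma birat_fst_ne_one_of_large (hx : 4 * |a| + 8 < |x|) (hy : 4 * |a| + 8 < |y|) :
    (birat a (x, y)).1 ≠ 1 := by
  have hx1 := ne_one_of_large hx
  rw [Ne, ← sub_eq_zero, birat_fst_sub_one hx1]
  exact div_ne_zero (birat_denom_ne_zero_of_large hx hy) (sub_ne_zero.mpr hx1)

lemma abs_birat_birat_fst_sub_le (hx : 4 * |a| + 8 < |x|) (hy : 4 * |a| + 8 < |y|) :
    |(birat a (birat a (x, y))).1 - x * (1 + (a - 1) / x + (a + 1) / y)| ≤
      8 * (|a| + 1) * |x| * (1 / x ^ 2 + 1 / y ^ 2) := by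
  have ha := abs_nonneg a
  have hx0 : 0 < |x| := by linarith
  have hy0 : 0 < |y| := by linarith
  have hx1 := ne_one_of_large hx
  have hD := abs_mul_abs_div_two_le_birat_denom (a := a) (x := x) (y := y)
    (by linarith) (by linarith) (by linarith)
  have hnum := abs_birat_birat_fst_numer_le (a := a) (x := x) (y := y)
    (by linarith) (by linarith) (by linarith)
  rw [birat_birat_fst_sub (abs_pos.mp hx0) hx1 (abs_pos.mp hy0)
    (birat_denom_ne_zero_of_large hx hy), abs_div, abs_mul, abs_mul y]
  calc |a + 1| * |x ^ 2 - x - y * (2 * x + a - 1)| / (|y| * |y * (x + a) - (x - 1)|)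
      ≤ (|a| + 1) * (4 * (x ^ 2 + y ^ 2)) / (|y| * (|x| * |y| / 2)) :=
        div_le_div₀ (by positivity)
          (mul_le_mul abs_add_one_le_abs_add_one hnum (abs_nonneg _) (by positivity))
          (by positivity) (mul_le_mul_of_nonneg_left hD hy0.le)
    _ = 8 * (|a| + 1) * |x| * (1 / x ^ 2 + 1 / y ^ 2) := by
        rw [← sq_abs x, ← sq_abs y]
        field_simp
        ring

lemma abs_birat_birat_snd_sub_le (hx : 4 * |a| + 8 < |x|) (hy : 4 * |a| + 8 < |y|) :
    |(birat a (birat a (x, y))).2 - y * (1 + (a - 1) / y + (a + 1) / x)| ≤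
      8 * (|a| + 1) * |y| / x ^ 2 := by
  have ha := abs_nonneg a
  have hx0 : 0 < |x| := by linarith
  have hy0 : 0 < |y| := by linarith
  have hx1 := ne_one_of_large hx
  rw [birat_birat_snd_sub (abs_pos.mp hx0) hx1 (abs_pos.mp hy0), abs_div, abs_mul y]
  calc |y| * |a + 1| / |x * (x - 1)| ≤ |y| * (|a| + 1) / (x ^ 2 / 2) :=
        div_le_div₀ (by positivity)
          (mul_le_mul_of_nonneg_left abs_add_one_le_abs_add_one hy0.le)
          (by have := abs_pos.mp hx0; positivity) (sq_div_two_le_abs_mul_sub_one (by linarith))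
    _ = 2 * (|a| + 1) * |y| / x ^ 2 := by field_simp
    _ ≤ 8 * (|a| + 1) * |y| / x ^ 2 := by gcongr; norm_num

end

theorem stmt18 (a : ℝ) :
    ∃ C > (0 : ℝ), ∃ C' > (0 : ℝ), ∀ x y : ℝ, C < |x| → C < |y| →
      x ≠ 1 ∧ (birat a (x, y)).1 ≠ 1 ∧
      |(birat a (birat a (x, y))).1 - x * (1 + (a - 1) / x + (a + 1) / y)| ≤
        C' * |x| * (1 / x ^ 2 + 1 / y ^ 2) ∧
      |(birat a (birat a (x, y))).2 - y * (1 + (a - 1) / y + (a + 1) / x)| ≤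
        C' * |y| / x ^ 2 := by
  refine ⟨4 * |a| + 8, by positivity, 8 * (|a| + 1), by positivity, fun x y hx hy => ?_⟩
  exact ⟨ne_one_of_large hx, birat_fst_ne_one_of_large hx hy,
    abs_birat_birat_fst_sub_le hx hy, abs_birat_birat_snd_sub_le hx hy⟩
end

section
/- (Points of the forward parabolic basin are wandering.) Suppose p ∈ ℝ² and N ≥ 0 are such that the forward orbit of p is defined up to time N and f^N(p) ∈ int R₊ = (-∞,1)×(-∞,0). Then there exists ε > 0 such that for every integer m ≥ 1 and every q ∈ ℝ² with ‖q − p‖ < ε whose forward orbit is defined up to time m, one has ‖f^m(q) − p‖ ≥ ε. -/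
/-! On `int R₊` the map `f` strictly decreases `x + y`, by at least `2` per step, and keeps
`int R₊` invariant. Hence a small ball around a point of `int R₊` never returns to itself, and
pulling this ball back by the continuous map `f^N` near `p` gives a wandering neighbourhood of `p`. -/

open Filter

open Metric Topology

lemma birat_mem_intRplus {a : ℝ} (ha : a < -1) {w : ℝ × ℝ} (hw : w ∈ intRplus) :
    birat a w ∈ intRplus ∧ (birat a w).1 + (birat a w).2 ≤ w.1 + w.2 - 2 := by
  obtain ⟨hx, hy⟩ := hw
  have hx1 : w.1 - 1 < 0 := by linarith
  have hneg : w.2 * (w.1 + a) / (w.1 - 1) < 0 :=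
    div_neg_of_pos_of_neg (by nlinarith) hx1
  -- `(x + a)/(x - 1) ≥ 1` on `int R₊`, so the new first coordinate is at most `y`
  have hle : w.2 * (w.1 + a) / (w.1 - 1) ≤ w.2 := by
    rw [div_le_iff_of_neg hx1]
    nlinarith
  simp only [birat, intRplus, Set.mem_ofPred_eq]
  exact ⟨⟨by linarith, by linarith⟩, by linarith⟩

lemma iterate_birat_mem_intRplus {a : ℝ} (ha : a < -1) (n : ℕ) {w : ℝ × ℝ}
    (hw : w ∈ intRplus) :
    (birat a)^[n] w ∈ intRplus ∧
      ((birat a)^[n] w).1 + ((birat a)^[n] w).2 ≤ w.1 + w.2 - 2 * n := by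
  induction n with
  | zero => simpa using hw
  | succ n ih =>
    obtain ⟨hmem, hsum⟩ := birat_mem_intRplus ha ih.1
    rw [Function.iterate_succ_apply']
    exact ⟨hmem, by push_cast; linarith [ih.2]⟩

lemma isOpen_intRplus : IsOpen intRplus :=
  (isOpen_lt continuous_fst continuous_const).inter (isOpen_lt continuous_snd continuous_const)

lemma iterate_birat_notMem_ball {a : ℝ} (ha : a < -1) {P w : ℝ × ℝ}
    (hw : w ∈ intRplus) (hwP : w ∈ ball P (1 / 2)) {m : ℕ} (hm : 1 ≤ m) :
    (birat a)^[m] w ∉ ball P (1 / 2) := by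
  intro hmP
  have hsum := (iterate_birat_mem_intRplus ha m hw).2
  have hm' : (1 : ℝ) ≤ m := by exact_mod_cast hm
  simp only [mem_ball, Prod.dist_eq, max_lt_iff, Real.dist_eq, abs_lt] at hwP hmP
  linarith [hwP.1.1, hwP.2.1, hmP.1.2, hmP.2.2]

lemma continuousAt_birat (a : ℝ) {w : ℝ × ℝ} (hw : w.1 ≠ 1) : ContinuousAt (birat a) w :=
  ((continuousAt_snd.mul (continuousAt_fst.add continuousAt_const)).div
      (continuousAt_fst.sub continuousAt_const) (sub_ne_zero.mpr hw)).prodMk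
    ((continuousAt_fst.add continuousAt_const).sub continuousAt_const)

lemma continuousAt_iterate_birat {a : ℝ} {p : ℝ × ℝ} {N : ℕ} (hdef : orbitDefined a p N) :
    ContinuousAt (birat a)^[N] p := by
  induction N with
  | zero => exact continuousAt_id
  | succ n ih =>
    rw [Function.iterate_succ']
    exact (continuousAt_birat a (hdef n n.lt_succ_self)).comp
      (ih fun k hk => hdef k (hk.trans n.lt_succ_self))

lemma dist_le_eucDist (q p : ℝ × ℝ) : dist q p ≤ eucDist q p := by
  rw [Prod.dist_eq, Real.dist_eq, Real.dist_eq, eucDist]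
  exact max_le (Real.abs_le_sqrt (by nlinarith)) (Real.abs_le_sqrt (by nlinarith))

theorem stmt19 (a : ℝ) (ha : a < -1) (p : ℝ × ℝ) (N : ℕ)
    (hdef : orbitDefined a p N) (hbasin : (birat a)^[N] p ∈ intRplus) :
    ∃ ε > (0 : ℝ), ∀ m : ℕ, 1 ≤ m → ∀ q : ℝ × ℝ,
      eucDist q p < ε → orbitDefined a q m → ε ≤ eucDist ((birat a)^[m] q) p := by
  set P := (birat a)^[N] p
  have hU : intRplus ∩ ball P (1 / 2) ∈ 𝓝 P :=
    (isOpen_intRplus.inter isOpen_ball).mem_nhds ⟨hbasin, mem_ball_self (by norm_num)⟩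
  obtain ⟨ε, hε, hball⟩ := eventually_nhds_iff_ball.mp (continuousAt_iterate_birat hdef hU)
  refine ⟨ε, hε, fun m hm q hq _ => not_lt.mp fun hmq => ?_⟩
  obtain ⟨hqR, hqP⟩ := hball q ((dist_le_eucDist q p).trans_lt hq)
  have hmqP := (hball _ ((dist_le_eucDist _ p).trans_lt hmq)).2
  rw [← Function.iterate_add_apply, add_comm, Function.iterate_add_apply] at hmqP
  exact iterate_birat_notMem_ball ha hqR hqP hm hmqP
end
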